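/- arXiv:1107.2579 — 5 statements merged into one kernel-verified Lean document; each statement's English description precedes it below -/
import Mathlib

section
/- Fix integers 1 ≤ k ≤ n ≤ m. Let x = (x₁,…,x_k) ∈ ℤ^k with x₁ ≥ x₂ ≥ … ≥ x_k and x₁ ≤ 1. Then the weight ζ(x) is dominant, its atypical matching is M(ζ(x)) = {(m−k+t, m+k+1−t) : t = 1,…,k}, so atyp(ζ(x)) = k, and its core equals the pair of multisets ({2m−k, 2m−k−2, …, k+2}, {2m−k+2, 2m−k+4, …, 2m+2n−3k}). -/
/-- The Weyl vector `ρ = (m, m−1, …, 1, −1, −2, …, −n)` for `gl(m|n)` (0-indexed). -/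
def rho (m n : ℕ) : Fin (m + n) → ℤ := fun i =>
  if (i : ℕ) < m then (m : ℤ) - (i : ℕ) else -(((i : ℕ) : ℤ) + 1 - m)

/-- A weight `λ ∈ ℤ^{m+n}` is dominant if its first `m` coordinates are weakly decreasing
and its last `n` coordinates are weakly decreasing. -/
def Dominant (m n : ℕ) (lam : Fin (m + n) → ℤ) : Prop :=
  ∀ i j : Fin (m + n), (i : ℕ) < (j : ℕ) → ((j : ℕ) < m ∨ m ≤ (i : ℕ)) → lam j ≤ lam i

/-- The atypical matching `M(λ)`. -/
def matching (m n : ℕ) (lam : Fin (m + n) → ℤ) : Set (Fin (m + n) × Fin (m + n)) :=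
  {p | (p.1 : ℕ) < m ∧ m ≤ (p.2 : ℕ) ∧
    (lam p.1 + rho m n p.1) + (lam p.2 + rho m n p.2) = 0}

/-- The core of a weight `λ`: the multiset of values `(λ+ρ)_i` over indices `i ≤ m` (1-based)
that are not first coordinates of pairs of `M(λ)`, together with the multiset of values
`−(λ+ρ)_j` over indices `j > m` that are not second coordinates of pairs of `M(λ)`. -/
noncomputable def core (m n : ℕ) (lam : Fin (m + n) → ℤ) : Multiset ℤ × Multiset ℤ :=
  ((@Finset.filter _
      (fun i : Fin (m + n) => (i : ℕ) < m ∧ ∀ p ∈ matching m n lam, p.1 ≠ i)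
      (Classical.decPred _) Finset.univ).val.map (fun i => lam i + rho m n i),
   (@Finset.filter _
      (fun j : Fin (m + n) => m ≤ (j : ℕ) ∧ ∀ p ∈ matching m n lam, p.2 ≠ j)
      (Classical.decPred _) Finset.univ).val.map (fun j => -(lam j + rho m n j)))

/-- The weight `ζ(x₁,…,x_k) = (p, p−1, …, 1, x₁, …, x_k, −x_k, …, −x₁,
−(q+1), …, −(q+n−k))` with `p = m−k`, `q = 2m−2k` (0-indexed). -/
def zeta (m n k : ℕ) (x : Fin k → ℤ) : Fin (m + n) → ℤ := fun i =>
  if h1 : (i : ℕ) < m - k then ((m - k - (i : ℕ) : ℕ) : ℤ)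
  else if h2 : (i : ℕ) < m then x ⟨(i : ℕ) - (m - k), by omega⟩
  else if h3 : (i : ℕ) < m + k then -(x ⟨k - 1 - ((i : ℕ) - m), by omega⟩)
  else -(2 * (m : ℤ) - 2 * (k : ℤ) + (((i : ℕ) - (m + k) : ℕ) : ℤ) + 1)

/-! The shifted weight `ζ(x) + ρ` equals `2m − k − 2i` on the first `m − k` indices,
`x_t + k − t` on the next `k`, the negatives of these in reverse order on the following `k`,
and `−(2m − k + 2 + 2s)` on the last `n − k`. As `x` is decreasing with `x₁ ≤ 1`, the middle
values `x_t + k − t` are pairwise distinct and at most `k + 1`, so they are separated from the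
outer values (at least `k + 2` on the left, at least `2m − k + 2` on the right), and the only
cancelling pairs are the mirror-image pairs of the two middle blocks. -/

lemma Fin.finset_val_map_eq_range_map {α : Type*} {N c d : ℕ} (hN : c + d ≤ N)
    {s : Finset (Fin N)} (hs : ∀ i : Fin N, i ∈ s ↔ c ≤ i ∧ (i : ℕ) < c + d)
    {f : Fin N → α} {g : ℕ → α} (hfg : ∀ i ∈ s, f i = g i) :
    s.val.map f = (Multiset.range d).map (fun t => g (c + t)) := by
  have hvals : s.map Fin.valEmbedding = (Finset.range d).map (addLeftEmbedding c) := by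
    rw [Finset.range_eq_Ico, Finset.map_add_left_Ico, add_zero]
    ext a
    simp only [Finset.mem_map, hs, Fin.valEmbedding_apply, Finset.mem_Ico]
    exact ⟨fun ⟨i, hi, hia⟩ => hia ▸ hi, fun ha => ⟨⟨a, by omega⟩, ha, rfl⟩⟩
  calc s.val.map f = (s.map Fin.valEmbedding).val.map g := by
        rw [Finset.map_val, Multiset.map_map]
        exact Multiset.map_congr rfl fun i hi => hfg i (Finset.mem_val.mp hi)
    _ = (Multiset.range d).map (fun t => g (c + t)) := by
        rw [hvals, Finset.map_val, Multiset.map_map, Finset.range_val]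
        rfl

section Zeta

variable {m n k : ℕ} (x : Fin k → ℤ) {i j : Fin (m + n)}

lemma rho_of_lt (h : (i : ℕ) < m) : rho m n i = m - i := if_pos h

lemma rho_of_le (h : m ≤ (i : ℕ)) : rho m n i = -(i + 1 - m) := if_neg (by omega)

lemma zeta_of_lt_sub (h : (i : ℕ) < m - k) : zeta m n k x i = m - k - i := by
  simp only [zeta, dif_pos h]
  omega

lemma zeta_of_sub_le_of_lt (h₁ : m - k ≤ (i : ℕ)) (h₂ : (i : ℕ) < m) :
    zeta m n k x i = x ⟨i - (m - k), by omega⟩ := by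
  simp only [zeta, dif_neg (show ¬(i : ℕ) < m - k by omega), dif_pos h₂]

lemma zeta_of_le_of_lt_add (h₁ : m ≤ (i : ℕ)) (h₂ : (i : ℕ) < m + k) :
    zeta m n k x i = -x ⟨k - 1 - (i - m), by omega⟩ := by
  simp only [zeta, dif_neg (show ¬(i : ℕ) < m - k by omega),
    dif_neg (show ¬(i : ℕ) < m by omega), dif_pos h₂]

lemma zeta_of_add_le (h : m + k ≤ (i : ℕ)) :
    zeta m n k x i = -(2 * m - 2 * k + (i - (m + k) : ℕ) + 1) := by
  simp only [zeta, dif_neg (show ¬(i : ℕ) < m - k by omega),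
    dif_neg (show ¬(i : ℕ) < m by omega), dif_neg (show ¬(i : ℕ) < m + k by omega)]

lemma zeta_add_rho_of_lt_sub (h : (i : ℕ) < m - k) :
    zeta m n k x i + rho m n i = 2 * m - k - 2 * i := by
  rw [zeta_of_lt_sub x h, rho_of_lt (by omega)]
  omega

lemma zeta_add_rho_of_sub_le_of_lt (h₁ : m - k ≤ (i : ℕ)) (h₂ : (i : ℕ) < m) :
    zeta m n k x i + rho m n i = x ⟨i - (m - k), by omega⟩ + (m - i) := by
  rw [zeta_of_sub_le_of_lt x h₁ h₂, rho_of_lt h₂]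

lemma zeta_add_rho_of_le_of_lt_add (h₁ : m ≤ (i : ℕ)) (h₂ : (i : ℕ) < m + k) :
    zeta m n k x i + rho m n i = -(x ⟨k - 1 - (i - m), by omega⟩ + (i + 1 - m)) := by
  rw [zeta_of_le_of_lt_add x h₁ h₂, rho_of_le h₁]
  ring

lemma zeta_add_rho_of_add_le (h : m + k ≤ (i : ℕ)) :
    zeta m n k x i + rho m n i = -(2 * i - 3 * k + 2) := by
  rw [zeta_of_add_le x h, rho_of_le (by omega)]
  omega

variable {x}

lemma Antitone.sub_val_injective (hx : Antitone x) : Function.Injective fun t => x t - t :=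
  (hx.add_strictAnti fun _ _ h => neg_lt_neg (Nat.cast_lt.mpr h)).injective

lemma zeta_add_rho_add_eq_zero_iff (hkm : k ≤ m) (hx : Antitone x) (hle : ∀ t, x t ≤ 1)
    (hi : (i : ℕ) < m) (hj : m ≤ (j : ℕ)) :
    zeta m n k x i + rho m n i + (zeta m n k x j + rho m n j) = 0 ↔
      m - k ≤ (i : ℕ) ∧ (i : ℕ) + j = 2 * m - 1 := by
  rcases lt_or_ge (i : ℕ) (m - k) with hi' | hi' <;> rcases lt_or_ge (j : ℕ) (m + k) with hj' | hj'
  · rw [zeta_add_rho_of_lt_sub x hi', zeta_add_rho_of_le_of_lt_add x hj hj']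
    have := hle ⟨k - 1 - (j - m), by omega⟩
    omega
  · rw [zeta_add_rho_of_lt_sub x hi', zeta_add_rho_of_add_le x hj']
    omega
  · rw [zeta_add_rho_of_sub_le_of_lt x hi' hi, zeta_add_rho_of_le_of_lt_add x hj hj']
    -- with `s = i - (m - k)` and `t = k - 1 - (j - m)`, cancellation reads `x s - s = x t - t`
    have hST := @hx.sub_val_injective _ _ ⟨i - (m - k), by omega⟩ ⟨k - 1 - (j - m), by omega⟩
    simp only [Fin.ext_iff] at hST
    constructor
    · intro h
      have := hST (by omega)
      omega
    · rintro ⟨-, hij⟩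
      have : x ⟨i - (m - k), by omega⟩ = x ⟨k - 1 - (j - m), by omega⟩ :=
        congrArg x (Fin.mk_eq_mk.mpr (by omega))
      omega
  · rw [zeta_add_rho_of_sub_le_of_lt x hi' hi, zeta_add_rho_of_add_le x hj']
    have := hle ⟨i - (m - k), by omega⟩
    omega

lemma zeta_le_of_lt_of_lt (hx : Antitone x) (hle : ∀ t, x t ≤ 1)
    (hij : (i : ℕ) < j) (hj : (j : ℕ) < m) : zeta m n k x j ≤ zeta m n k x i := by
  rcases lt_or_ge (j : ℕ) (m - k) with hj' | hj'
  · rw [zeta_of_lt_sub x hj', zeta_of_lt_sub x (hij.trans hj')]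
    omega
  rw [zeta_of_sub_le_of_lt x hj' hj]
  rcases lt_or_ge (i : ℕ) (m - k) with hi' | hi'
  · rw [zeta_of_lt_sub x hi']
    have := hle ⟨j - (m - k), by omega⟩
    omega
  · rw [zeta_of_sub_le_of_lt x hi' (hij.trans hj)]
    exact hx (Fin.mk_le_mk.mpr (by omega))

lemma zeta_le_of_le_of_lt (hkm : k ≤ m) (hx : Antitone x) (hle : ∀ t, x t ≤ 1)
    (hi : m ≤ (i : ℕ)) (hij : (i : ℕ) < j) : zeta m n k x j ≤ zeta m n k x i := by
  rcases lt_or_ge (i : ℕ) (m + k) with hi' | hi'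
  · rw [zeta_of_le_of_lt_add x hi hi']
    rcases lt_or_ge (j : ℕ) (m + k) with hj' | hj'
    · rw [zeta_of_le_of_lt_add x (hi.trans hij.le) hj']
      exact neg_le_neg (hx (Fin.mk_le_mk.mpr (by omega)))
    · rw [zeta_of_add_le x hj']
      have := hle ⟨k - 1 - (i - m), by omega⟩
      omega
  · rw [zeta_of_add_le x hi', zeta_of_add_le x (hi'.trans hij.le)]
    omega

lemma dominant_zeta (hkm : k ≤ m) (hx : Antitone x) (hle : ∀ t, x t ≤ 1) :
    Dominant m n (zeta m n k x) := fun _ _ hij h =>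
  h.elim (zeta_le_of_lt_of_lt hx hle hij) (zeta_le_of_le_of_lt hkm hx hle · hij)

lemma mem_matching_zeta_iff (hkm : k ≤ m) (hx : Antitone x) (hle : ∀ t, x t ≤ 1)
    {p : Fin (m + n) × Fin (m + n)} :
    p ∈ matching m n (zeta m n k x) ↔
      (p.1 : ℕ) < m ∧ m ≤ (p.2 : ℕ) ∧ m - k ≤ (p.1 : ℕ) ∧ (p.1 : ℕ) + p.2 = 2 * m - 1 := by
  simp only [matching, Set.mem_ofPred_eq]
  exact and_congr_right fun h₁ => and_congr_right fun h₂ =>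
    zeta_add_rho_add_eq_zero_iff hkm hx hle h₁ h₂

lemma matching_zeta (hkm : k ≤ m) (hx : Antitone x) (hle : ∀ t, x t ≤ 1) :
    matching m n (zeta m n k x) =
      {p | ∃ t : Fin k, (p.1 : ℕ) = m - k + t ∧ (p.2 : ℕ) = m + k - 1 - t} := by
  ext p
  rw [mem_matching_zeta_iff hkm hx hle, Set.mem_ofPred_eq]
  constructor
  · rintro ⟨h₁, -, h₃, h₄⟩
    exact ⟨⟨p.1 - (m - k), by omega⟩, by simp only; omega, by simp only; omega⟩
  · rintro ⟨t, h₁, h₂⟩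
    have := t.isLt
    omega

lemma ncard_matching_zeta (hkm : k ≤ m) (hkn : k ≤ n) (hx : Antitone x)
    (hle : ∀ t, x t ≤ 1) : (matching m n (zeta m n k x)).ncard = k := by
  have hrange : matching m n (zeta m n k x) =
      Set.range fun t : Fin k => ((⟨m - k + t, by omega⟩, ⟨m + k - 1 - t, by omega⟩) :
        Fin (m + n) × Fin (m + n)) := by
    rw [matching_zeta hkm hx hle]
    ext p
    simp only [Set.mem_ofPred_eq, Set.mem_range, Prod.ext_iff, Fin.ext_iff, eq_comm]
  rw [hrange, Set.ncard_range_of_injective, Nat.card_eq_fintype_card, Fintype.card_fin]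
  intro s t hst
  have := congrArg (fun p => (p.1 : ℕ)) hst
  exact Fin.ext (by simp only at this; omega)

lemma unmatched_left_zeta_iff (hkm : k ≤ m) (hkn : k ≤ n) (hx : Antitone x)
    (hle : ∀ t, x t ≤ 1) :
    ((i : ℕ) < m ∧ ∀ p ∈ matching m n (zeta m n k x), p.1 ≠ i) ↔ (i : ℕ) < m - k := by
  simp only [mem_matching_zeta_iff hkm hx hle]
  constructor
  · rintro ⟨hi, h⟩
    by_contra! hi'
    exact h (i, ⟨2 * m - 1 - i, by omega⟩) ⟨hi, by simp only; omega, hi', by simp only; omega⟩ rfl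
  · refine fun hi => ⟨by omega, ?_⟩
    rintro p ⟨-, -, hp, -⟩ rfl
    omega

lemma unmatched_right_zeta_iff (hkm : k ≤ m) (hx : Antitone x) (hle : ∀ t, x t ≤ 1) :
    (m ≤ (j : ℕ) ∧ ∀ p ∈ matching m n (zeta m n k x), p.2 ≠ j) ↔ m + k ≤ (j : ℕ) := by
  simp only [mem_matching_zeta_iff hkm hx hle]
  constructor
  · rintro ⟨hj, h⟩
    by_contra! hj'
    exact h (⟨2 * m - 1 - j, by omega⟩, j) ⟨by simp only; omega, hj, by simp only; omega,
      by simp only; omega⟩ rfl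
  · refine fun hj => ⟨by omega, ?_⟩
    rintro p ⟨hp₁, -, hp, hsum⟩ rfl
    omega

lemma core_zeta (hkm : k ≤ m) (hkn : k ≤ n) (hx : Antitone x) (hle : ∀ t, x t ≤ 1) :
    core m n (zeta m n k x) =
      ((Multiset.range (m - k)).map (fun i : ℕ => 2 * (m : ℤ) - k - 2 * i),
       (Multiset.range (n - k)).map (fun s : ℕ => 2 * (m : ℤ) - k + 2 + 2 * s)) := by
  simp only [core, Prod.mk.injEq]
  constructor
  · refine (Fin.finset_val_map_eq_range_map (c := 0) (d := m - k)
      (g := fun i : ℕ => 2 * (m : ℤ) - k - 2 * i) (by omega) (fun i => ?_)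
      fun i hi => zeta_add_rho_of_lt_sub x ?_).trans ?_
    · simp only [Finset.mem_filter, Finset.mem_univ, true_and,
        unmatched_left_zeta_iff hkm hkn hx hle]
      omega
    · simpa only [Finset.mem_filter, Finset.mem_univ, true_and,
        unmatched_left_zeta_iff hkm hkn hx hle] using hi
    · simp only [zero_add]
  · refine (Fin.finset_val_map_eq_range_map (c := m + k) (d := n - k)
      (g := fun j : ℕ => 2 * (j : ℤ) - 3 * k + 2) (by omega) (fun j => ?_)
      fun j hj => ?_).trans ?_
    · simp only [Finset.mem_filter, Finset.mem_univ, true_and,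
        unmatched_right_zeta_iff hkm hx hle]
      omega
    · simp only [Finset.mem_filter, Finset.mem_univ, true_and,
        unmatched_right_zeta_iff hkm hx hle] at hj
      rw [zeta_add_rho_of_add_le x hj, neg_neg]
    · refine Multiset.map_congr rfl fun t _ => ?_
      push_cast
      ring

end Zeta

theorem zeta_dominant_atypicality_core_general (m n k : ℕ) (hkn : k ≤ n) (hnm : n ≤ m)
    (x : Fin k → ℤ) (hdec : ∀ i j : Fin k, i ≤ j → x j ≤ x i)
    (hx1 : ∀ i : Fin k, (i : ℕ) = 0 → x i ≤ 1) :
    Dominant m n (zeta m n k x) ∧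
    matching m n (zeta m n k x) =
      {p : Fin (m + n) × Fin (m + n) | ∃ t : Fin k,
        (p.1 : ℕ) = m - k + (t : ℕ) ∧ (p.2 : ℕ) = m + k - 1 - (t : ℕ)} ∧
    (matching m n (zeta m n k x)).ncard = k ∧
    core m n (zeta m n k x) =
      ((Multiset.range (m - k)).map (fun i : ℕ => 2 * (m : ℤ) - (k : ℤ) - 2 * (i : ℤ)),
       (Multiset.range (n - k)).map (fun s : ℕ => 2 * (m : ℤ) - (k : ℤ) + 2 + 2 * (s : ℤ))) := by
  have hkm : k ≤ m := hkn.trans hnm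
  have hx : Antitone x := hdec
  have hle : ∀ t, x t ≤ 1 := fun t =>
    (hx (show (⟨0, t.pos⟩ : Fin k) ≤ t from Nat.zero_le _)).trans (hx1 _ rfl)
  exact ⟨dominant_zeta hkm hx hle, matching_zeta hkm hx hle, ncard_matching_zeta hkm hkn hx hle,
    core_zeta hkm hkn hx hle⟩

/-- For `1 ≤ k ≤ n ≤ m` and `x ∈ ℤ^k` weakly decreasing with `x₁ ≤ 1`, the weight `ζ(x)` is
dominant, its atypical matching consists of the pairs `(m−k+t, m+k+1−t)`, `t = 1,…,k`
(written 0-indexed), its atypicality is `k`, and its core is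
`({2m−k, 2m−k−2, …, k+2}, {2m−k+2, 2m−k+4, …, 2m+2n−3k})`. -/
theorem zeta_dominant_atypicality_core (m n k : ℕ) (hk : 1 ≤ k) (hkn : k ≤ n) (hnm : n ≤ m)
    (x : Fin k → ℤ) (hdec : ∀ i j : Fin k, i ≤ j → x j ≤ x i)
    (hx1 : ∀ i : Fin k, (i : ℕ) = 0 → x i ≤ 1) :
    Dominant m n (zeta m n k x) ∧
    matching m n (zeta m n k x) =
      {p : Fin (m + n) × Fin (m + n) | ∃ t : Fin k,
        (p.1 : ℕ) = m - k + (t : ℕ) ∧ (p.2 : ℕ) = m + k - 1 - (t : ℕ)} ∧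
    (matching m n (zeta m n k x)).ncard = k ∧
    core m n (zeta m n k x) =
      ((Multiset.range (m - k)).map (fun i : ℕ => 2 * (m : ℤ) - (k : ℤ) - 2 * (i : ℤ)),
       (Multiset.range (n - k)).map (fun s : ℕ => 2 * (m : ℤ) - (k : ℤ) + 2 + 2 * (s : ℤ))) :=
  zeta_dominant_atypicality_core_general m n k hkn hnm x hdec hx1
end

section
/- Fix integers m ≥ n ≥ 1. Let d and a be integers with d > 6(m+n) and 2d/3 < a ≤ d. Then the weight μ^{(a)} is dominant, its atypical matching is exactly M(μ^{(a)}) = {(1, m+n)}, so atyp(μ^{(a)}) = 1, and its core equals the pair of multisets ({2m−2, 2m−4, …, 2}, {2m, 2m+2, …, 2m+2n−4}). -/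
/-- The weight `μ^{(a)} = (a, p, p−1, …, 1, −(q+1), −(q+2), …, −(q+n−1), −b)` with
`p = m−1`, `q = 2m−2`, `b = a+m−n` (0-indexed). -/
def muA (m n : ℕ) (a : ℤ) : Fin (m + n) → ℤ := fun i =>
  if (i : ℕ) = 0 then a
  else if (i : ℕ) < m then (m : ℤ) - (i : ℕ)
  else if (i : ℕ) < m + n - 1 then -(2 * (m : ℤ) - 2 + (((i : ℕ) : ℤ) - m + 1))
  else -(a + (m : ℤ) - (n : ℤ))

/-- For integers `d > 6(m+n)` and `2d/3 < a ≤ d`, the weight `μ^{(a)}` is dominant, its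
atypical matching is exactly `{(1, m+n)}` (0-indexed: `{(0, m+n−1)}`), so `atyp(μ^{(a)}) = 1`,
and its core is `({2m−2, 2m−4, …, 2}, {2m, 2m+2, …, 2m+2n−4})`. -/
theorem muA_dominant_atypicality_core (m n : ℕ) (hn : 1 ≤ n) (hnm : n ≤ m) (d a : ℤ)
    (hd : 6 * ((m : ℤ) + n) < d) (ha1 : 2 * (d : ℚ) / 3 < (a : ℚ)) (ha2 : a ≤ d) :
    Dominant m n (muA m n a) ∧
    matching m n (muA m n a) =
      {p : Fin (m + n) × Fin (m + n) | (p.1 : ℕ) = 0 ∧ (p.2 : ℕ) = m + n - 1} ∧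
    (matching m n (muA m n a)).ncard = 1 ∧
    core m n (muA m n a) =
      ((Multiset.range (m - 1)).map (fun i : ℕ => 2 * (m : ℤ) - 2 - 2 * (i : ℤ)),
       (Multiset.range (n - 1)).map (fun s : ℕ => 2 * (m : ℤ) + 2 * (s : ℤ))) := by
  have hA : 4 * ((m : ℤ) + n) < a := by
    have h3 : 2 * d < 3 * a := by
      have h := (div_lt_iff₀ (by norm_num : (0:ℚ) < 3)).mp ha1
      have : (2 * d : ℚ) < (3 * a : ℚ) := by push_cast; linarith
      exact_mod_cast this
    omega
  -- Dominance
  have hdom : Dominant m n (muA m n a) := by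
    intro i j hij hcase
    have hi := i.isLt; have hj := j.isLt
    simp only [muA]
    split_ifs <;> omega
  -- Matching
  have hMatch : matching m n (muA m n a) =
      {p : Fin (m + n) × Fin (m + n) | (p.1 : ℕ) = 0 ∧ (p.2 : ℕ) = m + n - 1} := by
    ext ⟨i, j⟩
    have hi := i.isLt; have hj := j.isLt
    simp only [matching, Set.mem_setOf_eq, muA, rho]
    constructor
    · rintro ⟨h1, h2, h3⟩
      refine ⟨?_, ?_⟩ <;> (split_ifs at h3 <;> omega)
    · rintro ⟨h1, h2⟩
      refine ⟨by omega, by omega, ?_⟩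
      split_ifs <;> omega
  have hmem : ∀ p, p ∈ matching m n (muA m n a) ↔
      ((p.1 : ℕ) = 0 ∧ (p.2 : ℕ) = m + n - 1) := by
    intro p; rw [hMatch]; exact Iff.rfl
  -- ncard
  have hcard : (matching m n (muA m n a)).ncard = 1 := by
    have : matching m n (muA m n a) =
        {((⟨0, by omega⟩ : Fin (m + n)), (⟨m + n - 1, by omega⟩ : Fin (m + n)))} := by
      rw [hMatch]
      ext ⟨i, j⟩
      simp [Prod.ext_iff, Fin.ext_iff]
    rw [this, Set.ncard_singleton]
  refine ⟨hdom, hMatch, hcard, ?_⟩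
  -- range lemma
  have hrange : ∀ N : ℕ, Multiset.range N =
      (Finset.univ : Finset (Fin N)).val.map Fin.val := by
    intro N
    rw [← Finset.range_val, ← Nat.Iio_eq_range, ← Fin.map_valEmbedding_univ,
      Finset.map_val]
    rfl
  -- core
  unfold core
  simp only [Prod.mk.injEq]
  constructor
  · -- first component
    have em1inj : Function.Injective
        (fun k : Fin (m - 1) => (⟨(k : ℕ) + 1, by have := k.isLt; omega⟩ : Fin (m + n))) := by
      intro x y h
      have := congrArg Fin.val h
      simp only [Fin.val] at this
      exact Fin.ext (by omega)
    have hfil1 : (@Finset.filter _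
        (fun i : Fin (m + n) => (i : ℕ) < m ∧ ∀ p ∈ matching m n (muA m n a), p.1 ≠ i)
        (Classical.decPred _) Finset.univ) =
        Finset.univ.map ⟨_, em1inj⟩ := by
      ext x
      simp only [Finset.mem_filter, Finset.mem_univ, true_and, Finset.mem_map,
        Function.Embedding.coeFn_mk]
      constructor
      · rintro ⟨hx, hne⟩
        have h0 : (x : ℕ) ≠ 0 := by
          intro h0
          exact hne ((⟨0, by omega⟩ : Fin (m + n)), (⟨m + n - 1, by omega⟩ : Fin (m + n)))
            ((hmem _).mpr ⟨rfl, rfl⟩) (Fin.ext (by simpa using h0.symm))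
        exact ⟨⟨(x : ℕ) - 1, by omega⟩, Fin.ext (by simp; omega)⟩
      · rintro ⟨k, rfl⟩
        have hk := k.isLt
        refine ⟨by simp; omega, fun p hp h => ?_⟩
        have := (hmem p).mp hp
        have := congrArg Fin.val h
        simp at this
        omega
    rw [hfil1, Finset.map_val, Multiset.map_map, hrange (m - 1), Multiset.map_map]
    refine Multiset.map_congr rfl ?_
    intro k _
    have hk := k.isLt
    simp only [Function.comp_apply, Function.Embedding.coeFn_mk, muA, rho]
    split_ifs <;> push_cast <;> first | omega | tauto
  · -- second component
    have em2inj : Function.Injective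
        (fun k : Fin (n - 1) => (⟨m + (k : ℕ), by have := k.isLt; omega⟩ : Fin (m + n))) := by
      intro x y h
      have := congrArg Fin.val h
      simp only [Fin.val] at this
      exact Fin.ext (by omega)
    have hfil2 : (@Finset.filter _
        (fun j : Fin (m + n) => m ≤ (j : ℕ) ∧ ∀ p ∈ matching m n (muA m n a), p.2 ≠ j)
        (Classical.decPred _) Finset.univ) =
        Finset.univ.map ⟨_, em2inj⟩ := by
      ext x
      simp only [Finset.mem_filter, Finset.mem_univ, true_and, Finset.mem_map,
        Function.Embedding.coeFn_mk]
      constructor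
      · rintro ⟨hx, hne⟩
        have hlt := x.isLt
        have h0 : (x : ℕ) ≠ m + n - 1 := by
          intro h0
          exact hne ((⟨0, by omega⟩ : Fin (m + n)), (⟨m + n - 1, by omega⟩ : Fin (m + n)))
            ((hmem _).mpr ⟨rfl, rfl⟩) (Fin.ext (by simpa using h0.symm))
        exact ⟨⟨(x : ℕ) - m, by omega⟩, Fin.ext (by simp; omega)⟩
      · rintro ⟨k, rfl⟩
        have hk := k.isLt
        refine ⟨by simp, fun p hp h => ?_⟩
        have := (hmem p).mp hp
        have := congrArg Fin.val h
        simp at this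
        omega
    rw [hfil2, Finset.map_val, Multiset.map_map, hrange (n - 1), Multiset.map_map]
    refine Multiset.map_congr rfl ?_
    intro k _
    have hk := k.isLt
    simp only [Function.comp_apply, Function.Embedding.coeFn_mk, muA, rho]
    split_ifs <;> push_cast <;> first | omega | tauto
end

section
/- Fix integers 1 < k ≤ n ≤ m. There exist a constant C > 0 and a positive integer d₀, depending only on m, n and k, such that for every integer d ≥ d₀ and every point (b₁,…,b_k,a₁,…,a_k) ∈ S̃(d), the weight μ = ζ(b₁,…,b_k) satisfies W(μ) ≥ C·d^{(m+n−k−1)k}. -/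
/-!
Write `μ = ζ(b)` and `δ = d / (2k²)`. The conditions defining `S̃(d)` make `b` decrease by at
least `δ` at each step and stay below `-δ`, so `μ` is decreasing on the first `m` and on the last
`n` coordinates and every factor `(μ_i - μ_j + j - i) / (j - i)` of `W(μ)` is at least `1`.
When one of `i, j` is a position carrying some `±b_u` (`j ∈ [m-k, m)` in the first block,
`i ∈ [m, m+k)` in the second), then `μ_i - μ_j ≥ δ`, and since `j - i ≤ m + n` the factor
is at least `δ / (m + n)`. There are `∑_{j=m-k}^{m-1} j + ∑_{i=m}^{m+k-1} (m+n-1-i) = (m+n-k-1)k`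
such pairs, whence `W(μ) ≥ (d / (2k²(m+n)))^{(m+n-k-1)k}`.
-/

/-- The Weyl dimension product
`W(μ) = ∏_{1≤i<j≤m} (μ_i − μ_j + j − i)/(j − i) · ∏_{m+1≤i<j≤m+n} (μ_i − μ_j + j − i)/(j − i)`
(0-indexed) as a rational number. -/
def weylW (m n : ℕ) (mu : Fin (m + n) → ℤ) : ℚ :=
  (∏ p ∈ Finset.univ.filter
      (fun p : Fin (m + n) × Fin (m + n) => (p.1 : ℕ) < (p.2 : ℕ) ∧ (p.2 : ℕ) < m),
    (((mu p.1 - mu p.2 : ℤ) : ℚ) + ((p.2 : ℕ) : ℚ) - ((p.1 : ℕ) : ℚ)) /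
      (((p.2 : ℕ) : ℚ) - ((p.1 : ℕ) : ℚ))) *
  (∏ p ∈ Finset.univ.filter
      (fun p : Fin (m + n) × Fin (m + n) => m ≤ (p.1 : ℕ) ∧ (p.1 : ℕ) < (p.2 : ℕ)),
    (((mu p.1 - mu p.2 : ℤ) : ℚ) + ((p.2 : ℕ) : ℚ) - ((p.1 : ℕ) : ℚ)) /
      (((p.2 : ℕ) : ℚ) - ((p.1 : ℕ) : ℚ)))

/-- The set `S̃(d)`. -/
def tildeS (k d : ℕ) : Set ((Fin k → ℤ) × (Fin k → ℤ)) :=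
  {ba | (∑ i, ba.1 i) - 2 * (∑ i, ba.2 i) = (d : ℤ)
    ∧ (∀ i j : Fin k, (j : ℕ) = (i : ℕ) + 1 →
        ((ba.1 i - ba.1 j : ℤ) : ℝ) ≥ (d : ℝ) / (2 * (k : ℝ) ^ 2))
    ∧ (∀ i : Fin k, (i : ℕ) = 0 → ((ba.1 i : ℤ) : ℝ) ≤ -((d : ℝ) / (2 * (k : ℝ) ^ 2)))
    ∧ (∀ i j : Fin k, (j : ℕ) = (i : ℕ) + 1 → 0 ≤ ba.2 i - ba.2 j)
    ∧ (∀ i : Fin k, (i : ℕ) = 0 → ba.2 i ≤ 0)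
    ∧ 0 ≤ (∑ i, ba.1 i) - (∑ i, ba.2 i)
    ∧ (∑ i, ba.1 i) - (∑ i, ba.2 i) ≤ (d : ℤ)
    ∧ (∀ v : Fin k, ba.2 v ≤ ba.1 v)}

open Finset

theorem Finset.pow_card_le_prod_of_subset {ι R : Type*} [CommMonoidWithZero R] [Preorder R]
    [ZeroLEOneClass R] [PosMulMono R] {s t : Finset ι} {f : ι → R} {a : R} (hts : t ⊆ s)
    (ha : 0 ≤ a) (hat : ∀ i ∈ t, a ≤ f i) (hs : ∀ i ∈ s, 1 ≤ f i) :
    a ^ #t ≤ ∏ i ∈ s, f i :=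
  calc a ^ #t = ∏ _i ∈ t, a := (prod_const a).symm
    _ ≤ ∏ i ∈ t, f i := prod_le_prod (fun _ _ => ha) hat
    _ ≤ ∏ i ∈ s, f i := prod_le_prod_of_subset_of_one_le hts
        (fun i hi => zero_le_one.trans (hs i (hts hi))) fun i hi _ => hs i hi

theorem card_pairs_lt_snd_mem (N : ℕ) (s : Finset ℕ) (hs : ∀ j ∈ s, j < N) :
    #{p : Fin N × Fin N | (p.1 : ℕ) < p.2 ∧ (p.2 : ℕ) ∈ s} = ∑ j ∈ s, j := by
  rw [card_filter, Fintype.sum_prod_type_right]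
  have : ∀ j : Fin N, (∑ i : Fin N, if (i : ℕ) < j ∧ (j : ℕ) ∈ s then 1 else 0)
      = if (j : ℕ) ∈ s then (j : ℕ) else 0 := by
    intro j
    split_ifs with hj
    · simp only [hj, and_true, Fin.val_fin_lt]
      rw [← card_filter, filter_gt_eq_Iio, Fin.card_Iio]
    · simp [hj]
  simp only [this]
  rw [Fin.sum_univ_eq_sum_range (fun j => if j ∈ s then j else 0), ← sum_filter]
  congr 1
  ext j
  simp only [mem_filter, mem_range, and_iff_right_iff_imp]
  exact hs j

theorem card_pairs_lt_fst_mem (N : ℕ) (s : Finset ℕ) (hs : ∀ i ∈ s, i < N) :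
    #{p : Fin N × Fin N | (p.1 : ℕ) < p.2 ∧ (p.1 : ℕ) ∈ s} = ∑ i ∈ s, (N - 1 - i) := by
  rw [card_filter, Fintype.sum_prod_type]
  have : ∀ i : Fin N, (∑ j : Fin N, if (i : ℕ) < j ∧ (i : ℕ) ∈ s then 1 else 0)
      = if (i : ℕ) ∈ s then N - 1 - i else 0 := by
    intro i
    split_ifs with hi
    · simp only [hi, and_true, Fin.val_fin_lt]
      rw [← card_filter, filter_lt_eq_Ioi, Fin.card_Ioi]
    · simp [hi]
  simp only [this]
  rw [Fin.sum_univ_eq_sum_range (fun i => if i ∈ s then N - 1 - i else 0), ← sum_filter]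
  congr 1
  ext j
  simp only [mem_filter, mem_range, and_iff_right_iff_imp]
  exact hs j

theorem le_sub_of_lt_of_le_sub_succ {k : ℕ} {x : Fin k → ℝ} {δ : ℝ} (hδ : 0 ≤ δ)
    (hx : ∀ i j : Fin k, (j : ℕ) = i + 1 → δ ≤ x i - x j) {u v : Fin k} (huv : u < v) :
    δ ≤ x u - x v := by
  obtain ⟨t, ht⟩ : ∃ t, (v : ℕ) = u + 1 + t := ⟨v - (u + 1), by omega⟩
  induction t generalizing v with
  | zero => exact hx u v ht
  | succ t ih =>
    have hw : (u : ℕ) + 1 + t < k := by omega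
    have := ih (v := ⟨_, hw⟩) (Fin.lt_def.2 (by simp only; omega)) rfl
    have := hx ⟨_, hw⟩ v (by simp only; omega)
    linarith

namespace tildeS

variable {k d : ℕ} {ba : (Fin k → ℤ) × (Fin k → ℤ)}

theorem le_sub_of_lt (hba : ba ∈ tildeS k d) ⦃u v : Fin k⦄ (huv : u < v) :
    (d : ℝ) / (2 * k ^ 2) ≤ ba.1 u - ba.1 v :=
  le_sub_of_lt_of_le_sub_succ (δ := (d : ℝ) / (2 * k ^ 2)) (by positivity)
    (fun i j hij => by simpa using hba.2.1 i j hij) huv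

theorem le_neg (hba : ba ∈ tildeS k d) (u : Fin k) : (d : ℝ) / (2 * k ^ 2) ≤ -ba.1 u := by
  have h0 : 0 < k := u.pos
  have hfirst := hba.2.2.1 ⟨0, h0⟩ rfl
  obtain hu | hu := (u : ℕ).eq_zero_or_pos
  · rw [show u = ⟨0, h0⟩ from Fin.ext hu]
    linarith
  · have := le_sub_of_lt hba (u := ⟨0, h0⟩) (Fin.lt_def.2 hu)
    have : 0 ≤ (d : ℝ) / (2 * k ^ 2) := by positivity
    linarith

end tildeS

section zeta

variable {m n k : ℕ} (x : Fin k → ℤ) (i : Fin (m + n))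

theorem zeta_apply_of_lt_sub (hi : (i : ℕ) < m - k) : zeta m n k x i = (m - k - i : ℕ) := by
  rw [zeta, dif_pos hi]

theorem zeta_apply_of_sub_le_of_lt (hi : m - k ≤ i) (hi' : (i : ℕ) < m) :
    zeta m n k x i = x ⟨i - (m - k), by omega⟩ := by
  rw [zeta, dif_neg (by omega), dif_pos hi']

theorem zeta_apply_of_le_of_lt_add (hi : m ≤ i) (hi' : (i : ℕ) < m + k) :
    zeta m n k x i = -x ⟨k - 1 - (i - m), by omega⟩ := by
  rw [zeta, dif_neg (by omega), dif_neg (by omega), dif_pos hi']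

theorem zeta_apply_of_add_le (hi : m + k ≤ i) :
    zeta m n k x i = -(2 * m - 2 * k + (i - (m + k) : ℕ) + 1) := by
  rw [zeta, dif_neg (by omega), dif_neg (by omega), dif_neg (by omega)]

variable {x} {δ : ℝ} {i j : Fin (m + n)}

theorem le_zeta_sub_of_lt_of_mem_Ico
    (hgap : ∀ ⦃u v : Fin k⦄, u < v → δ ≤ (x u : ℝ) - x v)
    (hneg : ∀ u, δ ≤ -(x u : ℝ)) (hij : (i : ℕ) < j) (hj : m - k ≤ j)
    (hj' : (j : ℕ) < m) :
    δ ≤ ((zeta m n k x i - zeta m n k x j : ℤ) : ℝ) := by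
  rw [Int.cast_sub, zeta_apply_of_sub_le_of_lt x j hj hj']
  by_cases hi : (i : ℕ) < m - k
  · rw [zeta_apply_of_lt_sub x i hi, Int.cast_natCast]
    have := hneg ⟨j - (m - k), by omega⟩
    have : (0 : ℝ) ≤ (m - k - i : ℕ) := Nat.cast_nonneg _
    linarith
  · rw [zeta_apply_of_sub_le_of_lt x i (by omega) (by omega)]
    exact hgap (Fin.lt_def.2 (by simp only; omega))

theorem zeta_sub_nonneg_of_lt_of_lt (hδ : 0 ≤ δ)
    (hgap : ∀ ⦃u v : Fin k⦄, u < v → δ ≤ (x u : ℝ) - x v)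
    (hneg : ∀ u, δ ≤ -(x u : ℝ))
    (hij : (i : ℕ) < j) (hj : (j : ℕ) < m) :
    0 ≤ ((zeta m n k x i - zeta m n k x j : ℤ) : ℝ) := by
  by_cases hj' : m - k ≤ j
  · exact hδ.trans (le_zeta_sub_of_lt_of_mem_Ico hgap hneg hij hj' hj)
  · rw [zeta_apply_of_lt_sub x i (by omega), zeta_apply_of_lt_sub x j (by omega)]
    have : (m - k - j : ℕ) ≤ (m - k - i : ℕ) := by omega
    rw [Int.cast_sub, Int.cast_natCast, Int.cast_natCast, sub_nonneg]
    exact_mod_cast this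

theorem le_zeta_sub_of_mem_Ico_of_lt (hkm : k ≤ m)
    (hgap : ∀ ⦃u v : Fin k⦄, u < v → δ ≤ (x u : ℝ) - x v)
    (hneg : ∀ u, δ ≤ -(x u : ℝ))
    (hi : m ≤ i) (hi' : (i : ℕ) < m + k) (hij : (i : ℕ) < j) :
    δ ≤ ((zeta m n k x i - zeta m n k x j : ℤ) : ℝ) := by
  rw [Int.cast_sub, zeta_apply_of_le_of_lt_add x i hi hi']
  by_cases hj : (j : ℕ) < m + k
  · rw [zeta_apply_of_le_of_lt_add x j (by omega) hj]
    have := hgap (u := ⟨k - 1 - (j - m), by omega⟩) (v := ⟨k - 1 - (i - m), by omega⟩)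
      (Fin.lt_def.2 (by simp only; omega))
    push_cast
    linarith
  · rw [zeta_apply_of_add_le x j (by omega)]
    have := hneg ⟨k - 1 - (i - m), by omega⟩
    have : (k : ℝ) ≤ m := by exact_mod_cast hkm
    have : (0 : ℝ) ≤ (j - (m + k) : ℕ) := Nat.cast_nonneg _
    push_cast
    linarith

theorem zeta_sub_nonneg_of_le_of_lt (hkm : k ≤ m) (hδ : 0 ≤ δ)
    (hgap : ∀ ⦃u v : Fin k⦄, u < v → δ ≤ (x u : ℝ) - x v)
    (hneg : ∀ u, δ ≤ -(x u : ℝ))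
    (hi : m ≤ i) (hij : (i : ℕ) < j) :
    0 ≤ ((zeta m n k x i - zeta m n k x j : ℤ) : ℝ) := by
  by_cases hi' : (i : ℕ) < m + k
  · exact hδ.trans (le_zeta_sub_of_mem_Ico_of_lt hkm hgap hneg hi hi' hij)
  · rw [zeta_apply_of_add_le x i (by omega), zeta_apply_of_add_le x j (by omega)]
    have : ((i - (m + k) : ℕ) : ℝ) ≤ (j - (m + k) : ℕ) := by gcongr
    push_cast
    linarith

end zeta

noncomputable def weylFactor {N : ℕ} (mu : Fin N → ℤ) (i j : Fin N) : ℝ :=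
  (((mu i - mu j : ℤ) : ℝ) + (j : ℕ) - (i : ℕ)) / ((j : ℕ) - (i : ℕ))

theorem weylW_cast_eq {m n : ℕ} (mu : Fin (m + n) → ℤ) :
    (weylW m n mu : ℝ) =
      (∏ p ∈ {p : Fin (m + n) × Fin (m + n) | (p.1 : ℕ) < p.2 ∧ (p.2 : ℕ) < m},
        weylFactor mu p.1 p.2) *
      ∏ p ∈ {p : Fin (m + n) × Fin (m + n) | m ≤ (p.1 : ℕ) ∧ (p.1 : ℕ) < p.2},
        weylFactor mu p.1 p.2 := by
  unfold weylW weylFactor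
  push_cast
  rfl

section weylFactor

variable {N : ℕ} {mu : Fin N → ℤ} {i j : Fin N}

theorem one_le_weylFactor (hij : (i : ℕ) < j) (h : 0 ≤ ((mu i - mu j : ℤ) : ℝ)) :
    1 ≤ weylFactor mu i j := by
  have : ((i : ℕ) : ℝ) < (j : ℕ) := by exact_mod_cast hij
  rw [weylFactor, one_le_div (by linarith)]
  linarith

theorem div_le_weylFactor {A : ℝ} (hij : (i : ℕ) < j) (hA : 0 ≤ A)
    (h : A ≤ ((mu i - mu j : ℤ) : ℝ)) : A / N ≤ weylFactor mu i j := by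
  have hji : (0 : ℝ) < (j : ℕ) - (i : ℕ) := by
    have : ((i : ℕ) : ℝ) < (j : ℕ) := by exact_mod_cast hij
    linarith
  have hjN : ((j : ℕ) : ℝ) - (i : ℕ) ≤ N := by
    have : ((j : ℕ) : ℝ) ≤ N := by exact_mod_cast j.is_lt.le
    have : (0 : ℝ) ≤ (i : ℕ) := Nat.cast_nonneg _
    linarith
  calc A / N ≤ A / ((j : ℕ) - (i : ℕ)) := div_le_div_of_nonneg_left hA hji hjN
    _ ≤ weylFactor mu i j := by
      rw [weylFactor]
      gcongr
      linarith

end weylFactor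

section blocks

variable {m n k : ℕ} {x : Fin k → ℤ} {δ : ℝ}

theorem pow_le_prod_weylFactor_zeta_even (hδ : 0 ≤ δ)
    (hgap : ∀ ⦃u v : Fin k⦄, u < v → δ ≤ (x u : ℝ) - x v)
    (hneg : ∀ u, δ ≤ -(x u : ℝ)) :
    (δ / (m + n : ℕ)) ^ (∑ j ∈ Ico (m - k) m, j) ≤
      ∏ p ∈ {p : Fin (m + n) × Fin (m + n) | (p.1 : ℕ) < p.2 ∧ (p.2 : ℕ) < m},
        weylFactor (zeta m n k x) p.1 p.2 := by
  rw [← card_pairs_lt_snd_mem (m + n) (Ico (m - k) m) (fun j hj => by rw [mem_Ico] at hj; omega)]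
  refine pow_card_le_prod_of_subset ?_ (by positivity) ?_ ?_
  · intro p hp
    simp only [mem_filter, mem_univ, true_and, mem_Ico] at hp ⊢
    omega
  · intro p hp
    simp only [mem_filter, mem_univ, true_and, mem_Ico] at hp
    exact div_le_weylFactor hp.1 hδ (le_zeta_sub_of_lt_of_mem_Ico hgap hneg hp.1 hp.2.1 hp.2.2)
  · intro p hp
    simp only [mem_filter, mem_univ, true_and] at hp
    exact one_le_weylFactor hp.1 (zeta_sub_nonneg_of_lt_of_lt hδ hgap hneg hp.1 hp.2)

theorem pow_le_prod_weylFactor_zeta_odd (hkn : k ≤ n) (hkm : k ≤ m) (hδ : 0 ≤ δ)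
    (hgap : ∀ ⦃u v : Fin k⦄, u < v → δ ≤ (x u : ℝ) - x v)
    (hneg : ∀ u, δ ≤ -(x u : ℝ)) :
    (δ / (m + n : ℕ)) ^ (∑ i ∈ Ico m (m + k), (m + n - 1 - i)) ≤
      ∏ p ∈ {p : Fin (m + n) × Fin (m + n) | m ≤ (p.1 : ℕ) ∧ (p.1 : ℕ) < p.2},
        weylFactor (zeta m n k x) p.1 p.2 := by
  rw [← card_pairs_lt_fst_mem (m + n) (Ico m (m + k)) (fun i hi => by rw [mem_Ico] at hi; omega)]
  refine pow_card_le_prod_of_subset ?_ (by positivity) ?_ ?_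
  · intro p hp
    simp only [mem_filter, mem_univ, true_and, mem_Ico] at hp ⊢
    omega
  · intro p hp
    simp only [mem_filter, mem_univ, true_and, mem_Ico] at hp
    exact div_le_weylFactor hp.1 hδ
      (le_zeta_sub_of_mem_Ico_of_lt hkm hgap hneg hp.2.1 hp.2.2 hp.1)
  · intro p hp
    simp only [mem_filter, mem_univ, true_and] at hp
    exact one_le_weylFactor hp.2 (zeta_sub_nonneg_of_le_of_lt hkm hδ hgap hneg hp.1 hp.2)

end blocks

theorem sum_Ico_add_sum_Ico_sub_eq_mul {m n k : ℕ} (hkn : k ≤ n) (hkm : k ≤ m) :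
    ∑ j ∈ Ico (m - k) m, j + ∑ i ∈ Ico m (m + k), (m + n - 1 - i) =
      (m + n - k - 1) * k := by
  rw [sum_Ico_eq_sum_range, sum_Ico_eq_sum_range, Nat.sub_sub_self hkm, Nat.add_sub_cancel_left,
    ← sum_add_distrib, sum_congr rfl fun u hu => ?_, sum_const, card_range, smul_eq_mul, mul_comm]
  · simp only [mem_range] at hu
    show m - k + u + (m + n - 1 - (m + u)) = m + n - k - 1
    omega

/-- For `1 < k ≤ n ≤ m` there are `C > 0` and `d₀` (depending only on `m`, `n`, `k`) such
that for all `d ≥ d₀` and all `(b,a) ∈ S̃(d)`, the weight `μ = ζ(b)` satisfies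
`W(μ) ≥ C·d^{(m+n−k−1)k}`. -/
theorem zeta_weylW_lower_bound (m n k : ℕ) (hk : 1 < k) (hkn : k ≤ n) (hnm : n ≤ m) :
    ∃ C : ℝ, 0 < C ∧ ∃ d₀ : ℕ, 0 < d₀ ∧ ∀ d : ℕ, d₀ ≤ d →
      ∀ ba ∈ tildeS k d,
        C * (d : ℝ) ^ ((m + n - k - 1) * k) ≤ ((weylW m n (zeta m n k ba.1) : ℚ) : ℝ) := by
  have hkm : k ≤ m := hkn.trans hnm
  have hk0 : (0 : ℝ) < k := by exact_mod_cast (by omega : 0 < k)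
  have hmn : (0 : ℝ) < (m + n : ℕ) := by exact_mod_cast (by omega : 0 < m + n)
  refine ⟨(1 / (2 * k ^ 2 * (m + n : ℕ))) ^ ((m + n - k - 1) * k), by positivity, 1, one_pos,
    fun d _ ba hba => ?_⟩
  set δ : ℝ := d / (2 * k ^ 2)
  have hδ : 0 ≤ δ := by positivity
  have heven := pow_le_prod_weylFactor_zeta_even (m := m) (n := n) hδ
    (tildeS.le_sub_of_lt hba) (tildeS.le_neg hba)
  have hodd := pow_le_prod_weylFactor_zeta_odd hkn hkm hδ
    (tildeS.le_sub_of_lt hba) (tildeS.le_neg hba)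
  calc (1 / (2 * k ^ 2 * (m + n : ℕ))) ^ ((m + n - k - 1) * k) * (d : ℝ) ^ ((m + n - k - 1) * k)
      = (δ / (m + n : ℕ)) ^ ((m + n - k - 1) * k) := by
        rw [← mul_pow]; ring
    _ = (δ / (m + n : ℕ)) ^ (∑ j ∈ Ico (m - k) m, j) *
          (δ / (m + n : ℕ)) ^ (∑ i ∈ Ico m (m + k), (m + n - 1 - i)) := by
        rw [← pow_add, sum_Ico_add_sum_Ico_sub_eq_mul hkn hkm]
    _ ≤ _ := by
        rw [weylW_cast_eq]
        exact mul_le_mul heven hodd (by positivity) ((pow_nonneg (by positivity) _).trans heven)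
end

section
/- Fix integers m ≥ n ≥ 1. There exists a constant C > 0, depending only on m and n, such that for all integers d > 6(m+n) and all integers a with 2d/3 < a ≤ d, the weight μ^{(a)} satisfies W(μ^{(a)}) ≥ C·d^{m+n−2}. -/
private lemma aux_div (s d N D : ℚ) (hs : 1 ≤ s) (hd : 0 < d) (hD1 : 1 ≤ D)
    (hDs : D ≤ s) (hN : d / 6 ≤ N) : d / (6 * s) ≤ N / D := by
  have hD0 : 0 < D := by linarith
  rw [div_le_div_iff₀ (by linarith) hD0]
  have h1 : d * D ≤ d * s := by nlinarith
  have h2 : d * s ≤ (6 * N) * s := by nlinarith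
  nlinarith

/-- For `m ≥ n ≥ 1` there is `C > 0` (depending only on `m`, `n`) such that for all integers
`d > 6(m+n)` and all integers `a` with `2d/3 < a ≤ d`, one has
`W(μ^{(a)}) ≥ C·d^{m+n−2}`. -/
theorem muA_weylW_lower_bound (m n : ℕ) (hn : 1 ≤ n) (hnm : n ≤ m) :
    ∃ C : ℝ, 0 < C ∧ ∀ d : ℤ, 6 * ((m : ℤ) + n) < d → ∀ a : ℤ,
      2 * (d : ℚ) / 3 < (a : ℚ) → a ≤ d →
      C * (d : ℝ) ^ (m + n - 2) ≤ ((weylW m n (muA m n a) : ℚ) : ℝ) := by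
  have hm1 : 1 ≤ m := le_trans hn hnm
  refine ⟨((6 * ((m : ℝ) + n)) ^ (m + n - 2))⁻¹, by positivity, ?_⟩
  intro d hd a ha1 ha2
  have hdQ : 6 * ((m : ℚ) + n) < (d : ℚ) := by exact_mod_cast hd
  have hmQ : (1 : ℚ) ≤ (m : ℚ) := by exact_mod_cast hm1
  have hnQ : (1 : ℚ) ≤ (n : ℚ) := by exact_mod_cast hn
  have hsQ : (1 : ℚ) ≤ (m : ℚ) + n := by linarith
  have hd0 : (0 : ℚ) < d := by linarith
  set s : ℚ := (m : ℚ) + (n : ℚ) with hsdef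
  set c : ℚ := (d : ℚ) / (6 * s) with hcdef
  have hc1 : (1 : ℚ) ≤ c := by
    rw [hcdef, le_div_iff₀ (by linarith)]; linarith
  have hc0 : (0 : ℚ) < c := by linarith
  have haux : ∀ N D : ℚ, 1 ≤ D → D ≤ s → (d : ℚ) / 6 ≤ N → c ≤ N / D :=
    fun N D h1 h2 h3 => aux_div s d N D hsQ hd0 h1 h2 h3
  -- the first product
  have hP1 : c ^ (m - 1) ≤
      ∏ p ∈ Finset.univ.filter
        (fun p : Fin (m + n) × Fin (m + n) => (p.1 : ℕ) < (p.2 : ℕ) ∧ (p.2 : ℕ) < m),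
      (((muA m n a p.1 - muA m n a p.2 : ℤ) : ℚ) + ((p.2 : ℕ) : ℚ) - ((p.1 : ℕ) : ℚ)) /
        (((p.2 : ℕ) : ℚ) - ((p.1 : ℕ) : ℚ)) := by
    have step : ∏ p ∈ Finset.univ.filter
        (fun p : Fin (m + n) × Fin (m + n) => (p.1 : ℕ) < (p.2 : ℕ) ∧ (p.2 : ℕ) < m),
        (if (p.1 : ℕ) = 0 then c else 1) ≤
        ∏ p ∈ Finset.univ.filter
        (fun p : Fin (m + n) × Fin (m + n) => (p.1 : ℕ) < (p.2 : ℕ) ∧ (p.2 : ℕ) < m),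
        (((muA m n a p.1 - muA m n a p.2 : ℤ) : ℚ) + ((p.2 : ℕ) : ℚ) - ((p.1 : ℕ) : ℚ)) /
          (((p.2 : ℕ) : ℚ) - ((p.1 : ℕ) : ℚ)) := by
      apply Finset.prod_le_prod
      · intro p hp
        split <;> [exact hc0.le; norm_num]
      · intro p hp
        simp only [Finset.mem_filter, Finset.mem_univ, true_and] at hp
        obtain ⟨hij, hjm⟩ := hp
        by_cases hi0 : (p.1 : ℕ) = 0
        · rw [if_pos hi0]
          have hj0 : (p.2 : ℕ) ≠ 0 := by omega
          have hmu1 : muA m n a p.1 = a := by simp [muA, hi0]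
          have hmu2 : muA m n a p.2 = (m : ℤ) - ((p.2 : ℕ) : ℤ) := by
            simp [muA, hj0, hjm]
          rw [hmu1, hmu2, hi0]
          apply haux
          · have : (1 : ℕ) ≤ (p.2 : ℕ) := by omega
            have : (1 : ℚ) ≤ ((p.2 : ℕ) : ℚ) := by exact_mod_cast this
            push_cast
            linarith
          · have : ((p.2 : ℕ) : ℚ) ≤ (m : ℚ) := by
              exact_mod_cast Nat.le_of_lt hjm
            push_cast
            rw [hsdef]; linarith
          · have h1 : (1 : ℚ) ≤ ((p.2 : ℕ) : ℚ) := by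
              have : (1 : ℕ) ≤ (p.2 : ℕ) := by omega
              exact_mod_cast this
            push_cast
            linarith
        · rw [if_neg hi0]
          have him : (p.1 : ℕ) < m := lt_trans hij hjm
          have hj0 : (p.2 : ℕ) ≠ 0 := by omega
          have hmu1 : muA m n a p.1 = (m : ℤ) - ((p.1 : ℕ) : ℤ) := by
            simp [muA, hi0, him]
          have hmu2 : muA m n a p.2 = (m : ℤ) - ((p.2 : ℕ) : ℤ) := by
            simp [muA, hj0, hjm]
          have hden : (0 : ℚ) < ((p.2 : ℕ) : ℚ) - ((p.1 : ℕ) : ℚ) := by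
            have : ((p.1 : ℕ) : ℚ) < ((p.2 : ℕ) : ℚ) := by exact_mod_cast hij
            linarith
          have : (((muA m n a p.1 - muA m n a p.2 : ℤ) : ℚ) + ((p.2 : ℕ) : ℚ) -
              ((p.1 : ℕ) : ℚ)) / (((p.2 : ℕ) : ℚ) - ((p.1 : ℕ) : ℚ)) = 2 := by
            rw [hmu1, hmu2, div_eq_iff hden.ne']
            push_cast
            ring
          rw [this]; norm_num
    refine le_trans (le_of_eq ?_) step
    rw [Finset.prod_ite, Finset.prod_const, Finset.prod_const_one, mul_one]
    congr 1
    symm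
    rw [Finset.filter_filter]
    trans (Finset.Ioo 0 m).card
    · apply Finset.card_bij' (i := fun p (_ : p ∈ _) => ((p.2 : Fin (m + n)) : ℕ))
        (j := fun k hk => ((⟨0, by omega⟩ : Fin (m + n)),
          (⟨k, by simp only [Finset.mem_Ioo] at hk; omega⟩ : Fin (m + n))))
      case hi =>
        intro p hp
        simp only [Finset.mem_filter, Finset.mem_univ, true_and] at hp
        simp only [Finset.mem_Ioo]
        omega
      case hj =>
        intro k hk
        have hk' := hk
        simp only [Finset.mem_Ioo] at hk'
        simp only [Finset.mem_filter, Finset.mem_univ, true_and]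
        exact ⟨⟨by simpa using hk'.1, by simpa using hk'.2⟩, by trivial⟩
      case left_inv =>
        intro p hp
        simp only [Finset.mem_filter, Finset.mem_univ, true_and] at hp
        simp only [Prod.ext_iff, Fin.ext_iff]
        refine ⟨by simpa using hp.2.symm, by simp⟩
      case right_inv =>
        intro k hk
        simp
    · rw [Nat.card_Ioo]
      omega
  -- the second product
  have hP2 : c ^ (n - 1) ≤
      ∏ p ∈ Finset.univ.filter
        (fun p : Fin (m + n) × Fin (m + n) => m ≤ (p.1 : ℕ) ∧ (p.1 : ℕ) < (p.2 : ℕ)),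
      (((muA m n a p.1 - muA m n a p.2 : ℤ) : ℚ) + ((p.2 : ℕ) : ℚ) - ((p.1 : ℕ) : ℚ)) /
        (((p.2 : ℕ) : ℚ) - ((p.1 : ℕ) : ℚ)) := by
    have step : ∏ p ∈ Finset.univ.filter
        (fun p : Fin (m + n) × Fin (m + n) => m ≤ (p.1 : ℕ) ∧ (p.1 : ℕ) < (p.2 : ℕ)),
        (if (p.2 : ℕ) = m + n - 1 then c else 1) ≤
        ∏ p ∈ Finset.univ.filter
        (fun p : Fin (m + n) × Fin (m + n) => m ≤ (p.1 : ℕ) ∧ (p.1 : ℕ) < (p.2 : ℕ)),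
        (((muA m n a p.1 - muA m n a p.2 : ℤ) : ℚ) + ((p.2 : ℕ) : ℚ) - ((p.1 : ℕ) : ℚ)) /
          (((p.2 : ℕ) : ℚ) - ((p.1 : ℕ) : ℚ)) := by
      apply Finset.prod_le_prod
      · intro p hp
        split <;> [exact hc0.le; norm_num]
      · intro p hp
        simp only [Finset.mem_filter, Finset.mem_univ, true_and] at hp
        obtain ⟨hmi, hij⟩ := hp
        have hjlt : (p.2 : ℕ) < m + n := p.2.isLt
        by_cases hjtop : (p.2 : ℕ) = m + n - 1
        · rw [if_pos hjtop]
          have hi0 : ¬ (p.1 : ℕ) = 0 := by omega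
          have hilm : ¬ (p.1 : ℕ) < m := by omega
          have hitop : (p.1 : ℕ) < m + n - 1 := by omega
          have hmu1 : muA m n a p.1 =
              -(2 * (m : ℤ) - 2 + (((p.1 : ℕ) : ℤ) - m + 1)) := by
            simp [muA, hi0, hilm, hitop]
          have hj0 : ¬ (p.2 : ℕ) = 0 := by omega
          have hjlm : ¬ (p.2 : ℕ) < m := by omega
          have hjtop' : ¬ (p.2 : ℕ) < m + n - 1 := by omega
          have hmu2 : muA m n a p.2 = -(a + (m : ℤ) - n) := by
            simp [muA, hj0, hjlm, hjtop']
          rw [hmu1, hmu2, hjtop]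
          have hcast : ((m + n - 1 : ℕ) : ℚ) = (m : ℚ) + n - 1 := by
            have h2 : 1 ≤ m + n := by omega
            push_cast [Nat.cast_sub h2]
            ring
          rw [hcast]
          have hiQ : ((p.1 : ℕ) : ℚ) + 2 ≤ (m : ℚ) + n := by
            have : (p.1 : ℕ) + 2 ≤ m + n := by omega
            exact_mod_cast this
          have hiQ' : (m : ℚ) ≤ ((p.1 : ℕ) : ℚ) := by exact_mod_cast hmi
          apply haux
          · linarith
          · rw [hsdef]; linarith
          · push_cast
            linarith
        · rw [if_neg hjtop]
          have hi0 : ¬ (p.1 : ℕ) = 0 := by omega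
          have hilm : ¬ (p.1 : ℕ) < m := by omega
          have hitop : (p.1 : ℕ) < m + n - 1 := by omega
          have hj0 : ¬ (p.2 : ℕ) = 0 := by omega
          have hjlm : ¬ (p.2 : ℕ) < m := by omega
          have hjtop2 : (p.2 : ℕ) < m + n - 1 := by omega
          have hmu1 : muA m n a p.1 =
              -(2 * (m : ℤ) - 2 + (((p.1 : ℕ) : ℤ) - m + 1)) := by
            simp [muA, hi0, hilm, hitop]
          have hmu2 : muA m n a p.2 =
              -(2 * (m : ℤ) - 2 + (((p.2 : ℕ) : ℤ) - m + 1)) := by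
            simp [muA, hj0, hjlm, hjtop2]
          have hden : (0 : ℚ) < ((p.2 : ℕ) : ℚ) - ((p.1 : ℕ) : ℚ) := by
            have : ((p.1 : ℕ) : ℚ) < ((p.2 : ℕ) : ℚ) := by exact_mod_cast hij
            linarith
          have : (((muA m n a p.1 - muA m n a p.2 : ℤ) : ℚ) + ((p.2 : ℕ) : ℚ) -
              ((p.1 : ℕ) : ℚ)) / (((p.2 : ℕ) : ℚ) - ((p.1 : ℕ) : ℚ)) = 2 := by
            rw [hmu1, hmu2, div_eq_iff hden.ne']
            push_cast
            ring
          rw [this]; norm_num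
    refine le_trans (le_of_eq ?_) step
    rw [Finset.prod_ite, Finset.prod_const, Finset.prod_const_one, mul_one]
    congr 1
    symm
    rw [Finset.filter_filter]
    trans (Finset.Ico m (m + n - 1)).card
    · apply Finset.card_bij' (i := fun p (_ : p ∈ _) => ((p.1 : Fin (m + n)) : ℕ))
        (j := fun k hk => ((⟨k, by simp only [Finset.mem_Ico] at hk; omega⟩ : Fin (m + n)),
          (⟨m + n - 1, by omega⟩ : Fin (m + n))))
      case hi =>
        intro p hp
        simp only [Finset.mem_filter, Finset.mem_univ, true_and] at hp
        simp only [Finset.mem_Ico]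
        omega
      case hj =>
        intro k hk
        have hk' := hk
        simp only [Finset.mem_Ico] at hk'
        simp only [Finset.mem_filter, Finset.mem_univ, true_and]
        exact ⟨⟨by simpa using hk'.1, by simpa using hk'.2⟩, by trivial⟩
      case left_inv =>
        intro p hp
        simp only [Finset.mem_filter, Finset.mem_univ, true_and] at hp
        simp only [Prod.ext_iff, Fin.ext_iff]
        refine ⟨by simp, by simpa using hp.2.symm⟩
      case right_inv =>
        intro k hk
        simp
    · rw [Nat.card_Ico]
      omega
  -- combine
  have key : c ^ (m + n - 2) ≤ weylW m n (muA m n a) := by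
    rw [weylW]
    calc c ^ (m + n - 2) = c ^ (m - 1) * c ^ (n - 1) := by
          rw [← pow_add]; congr 1; omega
      _ ≤ _ := mul_le_mul hP1 hP2 (pow_nonneg hc0.le _)
          (le_trans (pow_nonneg hc0.le _) hP1)
  have keyR : ((c ^ (m + n - 2) : ℚ) : ℝ) ≤ ((weylW m n (muA m n a) : ℚ) : ℝ) := by
    exact_mod_cast key
  refine le_trans (le_of_eq ?_) keyR
  rw [hcdef, hsdef]
  push_cast
  rw [div_pow]
  ring
end

section
/- Fix integers m ≥ n ≥ k ≥ 1, a real number D ≥ 0, and a dominant weight λ with atyp(λ) = k, λ_i > 0 for 1 ≤ i ≤ m, and λ_i < 0 for m+1 ≤ i ≤ m+n. Then there exists a constant C > 0, depending only on m, n, λ and D, such that for every integer d ≥ 1 and every dominant weight μ with atyp(μ) = k, core(μ) = core(λ), μ_i ≥ 0 for 1 ≤ i ≤ m, μ_i ≤ 0 for m+1 ≤ i ≤ m+n, Σ_{i=1}^{m+n} μ_i = Σ_{i=1}^{m+n} λ_i, and Σ_{i=1}^{m} μ_i ≤ d + D, one has W(μ) ≤ C·d^{(m+n−k−1)k}. 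-/
open Finset in
lemma two_mul_card_lt_pairs {N : ℕ} (s : Finset (Fin N)) :
    2 * ((s ×ˢ s).filter fun p => (p.1 : ℕ) < (p.2 : ℕ)).card + s.card
      = s.card * s.card := by
  classical
  have hswap : ((s ×ˢ s).filter fun p => (p.2 : ℕ) < (p.1 : ℕ)).card
      = ((s ×ˢ s).filter fun p => (p.1 : ℕ) < (p.2 : ℕ)).card := by
    apply Finset.card_bij (fun p _ => p.swap)
    · intro p hp
      simp only [mem_filter, mem_product] at *
      exact ⟨⟨hp.1.2, hp.1.1⟩, hp.2⟩
    · intro p _ q _ h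
      exact Prod.swap_injective h
    · intro p hp
      refine ⟨p.swap, ?_, by simp⟩
      simp only [mem_filter, mem_product] at *
      exact ⟨⟨hp.1.2, hp.1.1⟩, hp.2⟩
  have hunion : ((s ×ˢ s).filter fun p => (p.1 : ℕ) < (p.2 : ℕ)) ∪
      ((s ×ˢ s).filter fun p => (p.2 : ℕ) < (p.1 : ℕ)) = s.offDiag := by
    ext p
    simp only [mem_union, mem_filter, mem_product, Finset.mem_offDiag, Ne, Prod.ext_iff,
      Fin.ext_iff]
    constructor
    · rintro (⟨⟨h1, h2⟩, h3⟩ | ⟨⟨h1, h2⟩, h3⟩) <;> exact ⟨h1, h2, by omega⟩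
    · rintro ⟨h1, h2, h3⟩
      rcases lt_or_gt_of_ne h3 with h | h
      · exact Or.inl ⟨⟨h1, h2⟩, h⟩
      · exact Or.inr ⟨⟨h1, h2⟩, h⟩
  have hdisj : Disjoint ((s ×ˢ s).filter fun p => (p.1 : ℕ) < (p.2 : ℕ))
      ((s ×ˢ s).filter fun p => (p.2 : ℕ) < (p.1 : ℕ)) := by
    rw [Finset.disjoint_left]
    intro p h1 h2
    simp only [mem_filter] at h1 h2
    omega
  have h := Finset.card_union_of_disjoint hdisj
  rw [hunion, Finset.offDiag_card] at h
  have h2 : s.card ≤ s.card * s.card := by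
    rcases Nat.eq_zero_or_pos s.card with h0 | h0
    · simp [h0]
    · exact Nat.le_mul_of_pos_left _ h0
  generalize hX : s.card * s.card = X at h h2 ⊢
  omega

lemma card_first_block (m n : ℕ) :
    ((Finset.univ : Finset (Fin (m+n))).filter fun i : Fin (m+n) => (i:ℕ) < m).card = m := by
  rw [Finset.card_filter, Fin.sum_univ_eq_sum_range (fun i => if i < m then 1 else 0) (m+n),
    ← Finset.card_filter]
  have : (Finset.range (m+n)).filter (fun i => i < m) = Finset.range m := by
    ext i; simp; omega
  rw [this, Finset.card_range]

lemma rho_bound (m n : ℕ) (i : Fin (m + n)) : |rho m n i| ≤ (m + n : ℤ) := by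
  have := i.isLt
  unfold rho
  split <;> rw [abs_le] <;> push_cast <;> omega

set_option maxHeartbeats 8000000

lemma comb_key (m k b s u t g : ℤ) (hb0 : 0 ≤ b) (hbk : b ≤ k) (hkm : k ≤ m)
    (hg : g = m - b) (ht : 2 * t + m = m * m) (hu : 2 * u + g = g * g)
    (hs : s + u = t) : 2 * s ≤ k * (2 * m - k - 1) := by
  have h1 : 0 ≤ (k - b) * ((k - b) - 1) := by
    rcases lt_or_ge (k - b) 1 with h | h
    · nlinarith
    · nlinarith
  have h2 : 0 ≤ (k - b) * (m - k) := mul_nonneg (by omega) (by omega)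
  nlinarith [h1, h2]

/-- Given `m ≥ n ≥ k ≥ 1`, `D ≥ 0` and a dominant weight `λ` of atypicality `k` with
positive first `m` entries and negative last `n` entries, there is `C > 0` (depending only
on `m`, `n`, `λ`, `D`) such that for every `d ≥ 1` and every dominant weight `μ` of
atypicality `k`, with the same core and total coordinate sum as `λ`, nonnegative first `m`
entries and nonpositive last `n` entries, and with `Σ_{i=1}^{m} μ_i ≤ d + D`, one has
`W(μ) ≤ C·d^{(m+n−k−1)k}`. -/
theorem weylW_upper_bound (m n k : ℕ) (hnm : n ≤ m) (hkn : k ≤ n) (hk : 1 ≤ k)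
    (D : ℝ) (hD : 0 ≤ D) (lam : Fin (m + n) → ℤ)
    (hldom : Dominant m n lam) (hlatyp : (matching m n lam).ncard = k)
    (hlpos : ∀ i : Fin (m + n), (i : ℕ) < m → 0 < lam i)
    (hlneg : ∀ i : Fin (m + n), m ≤ (i : ℕ) → lam i < 0) :
    ∃ C : ℝ, 0 < C ∧ ∀ d : ℕ, 1 ≤ d → ∀ mu : Fin (m + n) → ℤ,
      Dominant m n mu → (matching m n mu).ncard = k → core m n mu = core m n lam →
      (∀ i : Fin (m + n), (i : ℕ) < m → 0 ≤ mu i) →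
      (∀ i : Fin (m + n), m ≤ (i : ℕ) → mu i ≤ 0) →
      (∑ i, mu i) = (∑ i, lam i) →
      ((∑ i ∈ Finset.univ.filter (fun i : Fin (m + n) => (i : ℕ) < m), mu i : ℤ) : ℝ)
        ≤ (d : ℝ) + D →
      ((weylW m n mu : ℚ) : ℝ) ≤ C * (d : ℝ) ^ ((m + n - k - 1) * k) := by
  classical
  set Sl : ℤ := ∑ i, lam i with hSldef
  set K1 : ℤ := ((core m n lam).1.map (fun x => |x|)).sum with hK1def
  set K2 : ℤ := ((core m n lam).2.map (fun x => |x|)).sum with hK2def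
  have hK1 : 0 ≤ K1 := Multiset.sum_nonneg (by
    intro x hx; rcases Multiset.mem_map.mp hx with ⟨y, _, rfl⟩; exact abs_nonneg y)
  have hK2 : 0 ≤ K2 := Multiset.sum_nonneg (by
    intro x hx; rcases Multiset.mem_map.mp hx with ⟨y, _, rfl⟩; exact abs_nonneg y)
  set c : ℝ := (K1 : ℝ) + (K2 : ℝ) + |(Sl : ℝ)| + D + 2 * ((m : ℝ) + n) + 1 with hcdef
  have hc1 : 1 ≤ c := by
    have hK1' : (0:ℝ) ≤ (K1 : ℝ) := by exact_mod_cast hK1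
    have hK2' : (0:ℝ) ≤ (K2 : ℝ) := by exact_mod_cast hK2
    have h1 : (0:ℝ) ≤ |(Sl:ℝ)| := abs_nonneg _
    have h2 : (0:ℝ) ≤ 2 * ((m:ℝ) + n) := by positivity
    rw [hcdef]
    linarith only [hK1', hK2', h1, h2, hD]
  have hc0 : 0 < c := lt_of_lt_of_le one_pos hc1
  refine ⟨c ^ (2 * ((m + n) * (m + n))), pow_pos hc0 _, ?_⟩
  intro d hd mu hdom hatyp hcore hpos hneg hsum hsum1
  have hd1 : (1:ℝ) ≤ (d:ℝ) := by exact_mod_cast hd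
  have hd0 : (0:ℝ) < (d:ℝ) := lt_of_lt_of_le one_pos hd1
  -- the matching as a finset
  have hMfin : (matching m n mu).Finite := Set.toFinite _
  set M : Finset (Fin (m+n) × Fin (m+n)) := hMfin.toFinset with hMdef
  have hMcard : M.card = k := by
    rw [← hatyp]; exact (Set.ncard_eq_toFinset_card _ hMfin).symm
  set B1 : Finset (Fin (m+n)) := M.image Prod.fst with hB1def
  set B2 : Finset (Fin (m+n)) := M.image Prod.snd with hB2def
  have hB1card : B1.card ≤ k := le_trans Finset.card_image_le (le_of_eq hMcard)
  have hB2card : B2.card ≤ k := le_trans Finset.card_image_le (le_of_eq hMcard)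
  set F1 : Finset (Fin (m+n)) := Finset.univ.filter (fun i : Fin (m+n) => (i:ℕ) < m) with hF1def
  set F2 : Finset (Fin (m+n)) := Finset.univ.filter (fun i : Fin (m+n) => m ≤ (i:ℕ)) with hF2def
  have hF1card : F1.card = m := card_first_block m n
  have hF2card : F2.card = n := by
    have h := Finset.card_filter_add_card_filter_not
      (s := (Finset.univ : Finset (Fin (m+n)))) (p := fun i : Fin (m+n) => (i:ℕ) < m)
    have he : Finset.univ.filter (fun i : Fin (m+n) => ¬ (i:ℕ) < m) = F2 := by
      rw [hF2def]; apply Finset.filter_congr; intro i _; simp [Nat.not_lt]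
    rw [he] at h
    have hcard : (Finset.univ : Finset (Fin (m+n))).card = m + n := by
      simp
    rw [← hF1def] at h
    omega
  have hB1F1 : B1 ⊆ F1 := by
    intro i hi
    rcases Finset.mem_image.mp hi with ⟨p, hp, rfl⟩
    have := (hMfin.mem_toFinset.mp hp).1
    rw [hF1def]; simp [this]
  have hB2F2 : B2 ⊆ F2 := by
    intro i hi
    rcases Finset.mem_image.mp hi with ⟨p, hp, rfl⟩
    have := (hMfin.mem_toFinset.mp hp).2.1
    rw [hF2def]; simp [this]
  set G1 : Finset (Fin (m+n)) := F1 \ B1 with hG1def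
  set G2 : Finset (Fin (m+n)) := F2 \ B2 with hG2def
  have hG1card : G1.card = m - B1.card := by
    rw [hG1def, Finset.card_sdiff_of_subset hB1F1, hF1card]
  have hG2card : G2.card = n - B2.card := by
    rw [hG2def, Finset.card_sdiff_of_subset hB2F2, hF2card]
  -- bounds on entries
  have hgood1 : ∀ i : Fin (m+n), (i:ℕ) < m → i ∉ B1 → mu i ≤ K1 + (m+n) := by
    intro i him hiB
    have hmem : mu i + rho m n i ∈ (core m n mu).1 := by
      simp only [core]
      apply Multiset.mem_map.mpr
      refine ⟨i, Finset.mem_val.mpr ?_, rfl⟩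
      refine (@Finset.mem_filter _ _ (Classical.decPred _) Finset.univ i).mpr
        ⟨Finset.mem_univ _, him, ?_⟩
      intro p hp hpi
      exact hiB (Finset.mem_image.mpr ⟨p, hMfin.mem_toFinset.mpr hp, hpi⟩)
    rw [hcore] at hmem
    have h1 : mu i + rho m n i ≤ K1 := by
      refine le_trans (le_abs_self _) ?_
      refine Multiset.single_le_sum ?_ _ (Multiset.mem_map_of_mem _ hmem)
      intro x hx; rcases Multiset.mem_map.mp hx with ⟨y, _, rfl⟩; exact abs_nonneg y
    have h2 := abs_le.mp (rho_bound m n i)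
    omega
  have hgood2 : ∀ j : Fin (m+n), m ≤ (j:ℕ) → j ∉ B2 → -(K2 + (m+n)) ≤ mu j := by
    intro j hjm hjB
    have hmem : -(mu j + rho m n j) ∈ (core m n mu).2 := by
      simp only [core]
      apply Multiset.mem_map.mpr
      refine ⟨j, Finset.mem_val.mpr ?_, rfl⟩
      refine (@Finset.mem_filter _ _ (Classical.decPred _) Finset.univ j).mpr
        ⟨Finset.mem_univ _, hjm, ?_⟩
      intro p hp hpj
      exact hjB (Finset.mem_image.mpr ⟨p, hMfin.mem_toFinset.mpr hp, hpj⟩)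
    rw [hcore] at hmem
    have h1 : -(mu j + rho m n j) ≤ K2 := by
      refine le_trans (le_abs_self _) ?_
      refine Multiset.single_le_sum ?_ _ (Multiset.mem_map_of_mem _ hmem)
      intro x hx; rcases Multiset.mem_map.mp hx with ⟨y, _, rfl⟩; exact abs_nonneg y
    have h2 := abs_le.mp (rho_bound m n j)
    omega
  have hcrude1 : ∀ i : Fin (m+n), (i:ℕ) < m → (mu i : ℝ) ≤ (d:ℝ) + D := by
    intro i him
    have h1 : mu i ≤ ∑ j ∈ F1, mu j := by
      refine Finset.single_le_sum (fun j hj => ?_) ?_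
      · exact hpos j (by rw [hF1def] at hj; exact (Finset.mem_filter.mp hj).2)
      · rw [hF1def]; exact Finset.mem_filter.mpr ⟨Finset.mem_univ _, him⟩
    calc (mu i : ℝ) ≤ ((∑ j ∈ F1, mu j : ℤ) : ℝ) := by exact_mod_cast h1
      _ ≤ (d:ℝ) + D := hsum1
  have hsumF2 : ∑ j ∈ F2, mu j = Sl - ∑ i ∈ F1, mu i := by
    have h := Finset.sum_filter_add_sum_filter_not
      (Finset.univ : Finset (Fin (m+n))) (fun i : Fin (m+n) => (i:ℕ) < m) mu
    have he : Finset.univ.filter (fun i : Fin (m+n) => ¬ (i:ℕ) < m) = F2 := by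
      rw [hF2def]; apply Finset.filter_congr; intro i _; simp [Nat.not_lt]
    rw [he, ← hF1def, hsum] at h
    omega
  have hcrude2 : ∀ j : Fin (m+n), m ≤ (j:ℕ) → (Sl:ℝ) - ((d:ℝ) + D) ≤ (mu j : ℝ) := by
    intro j hjm
    have hjF2 : j ∈ F2 := by rw [hF2def]; exact Finset.mem_filter.mpr ⟨Finset.mem_univ _, hjm⟩
    have h1 : ∑ j' ∈ F2, mu j' ≤ mu j := by
      rw [← Finset.add_sum_erase F2 mu hjF2]
      have : ∑ j' ∈ F2.erase j, mu j' ≤ 0 := by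
        refine Finset.sum_nonpos (fun j' hj' => ?_)
        refine hneg j' ?_
        have := Finset.mem_of_mem_erase hj'
        rw [hF2def] at this; exact (Finset.mem_filter.mp this).2
      omega
    have h2 : ((∑ j' ∈ F2, mu j' : ℤ) : ℝ) = (Sl:ℝ) - ((∑ i ∈ F1, mu i : ℤ) : ℝ) := by
      rw [hsumF2]; push_cast; ring
    calc (Sl:ℝ) - ((d:ℝ) + D) ≤ (Sl:ℝ) - ((∑ i ∈ F1, mu i : ℤ) : ℝ) := by
          linarith only [hsum1]
      _ = ((∑ j' ∈ F2, mu j' : ℤ) : ℝ) := h2.symm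
      _ ≤ (mu j : ℝ) := by exact_mod_cast h1
  -- the real factor function
  set f : Fin (m+n) × Fin (m+n) → ℝ := fun p =>
    (((mu p.1 : ℝ) - (mu p.2 : ℝ)) + ((p.2:ℕ):ℝ) - ((p.1:ℕ):ℝ)) / (((p.2:ℕ):ℝ) - ((p.1:ℕ):ℝ))
    with hfdef
  set T1 : Finset (Fin (m+n) × Fin (m+n)) := Finset.univ.filter
      (fun p : Fin (m+n) × Fin (m+n) => (p.1 : ℕ) < (p.2 : ℕ) ∧ (p.2 : ℕ) < m) with hT1def
  set T2 : Finset (Fin (m+n) × Fin (m+n)) := Finset.univ.filter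
      (fun p : Fin (m+n) × Fin (m+n) => m ≤ (p.1 : ℕ) ∧ (p.1 : ℕ) < (p.2 : ℕ)) with hT2def
  have hW : ((weylW m n mu : ℚ) : ℝ) = (∏ p ∈ T1, f p) * (∏ p ∈ T2, f p) := by
    rw [weylW]
    push_cast
    rfl
  -- generic factor facts
  have hfac : ∀ p : Fin (m+n) × Fin (m+n), (p.1:ℕ) < (p.2:ℕ) →
      ((p.2:ℕ) < m ∨ m ≤ (p.1:ℕ)) →
      (1 ≤ f p ∧ f p ≤ (mu p.1 : ℝ) - (mu p.2 : ℝ) + ((p.2:ℕ):ℝ) - ((p.1:ℕ):ℝ)) := by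
    intro p hlt hblk
    have hden : (1:ℝ) ≤ ((p.2:ℕ):ℝ) - ((p.1:ℕ):ℝ) := by
      have : (p.1:ℕ) + 1 ≤ (p.2:ℕ) := hlt
      have := (Nat.cast_le (α := ℝ)).mpr this
      push_cast at this
      linarith only [this]
    have hmono : mu p.2 ≤ mu p.1 := hdom p.1 p.2 hlt hblk
    have hmono' : (mu p.2 : ℝ) ≤ (mu p.1 : ℝ) := by exact_mod_cast hmono
    constructor
    · rw [hfdef]
      rw [le_div_iff₀ (by linarith only [hden])]
      linarith only [hmono', hden]
    · rw [hfdef]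
      have hnum : (0:ℝ) ≤ (mu p.1 : ℝ) - (mu p.2 : ℝ) + ((p.2:ℕ):ℝ) - ((p.1:ℕ):ℝ) := by
        linarith only [hmono', hden]
      exact div_le_self hnum hden
  have hT1mem : ∀ p : Fin (m+n) × Fin (m+n), p ∈ T1 ↔ ((p.1:ℕ) < (p.2:ℕ) ∧ (p.2:ℕ) < m) := by
    intro p; rw [hT1def]; simp
  have hT2mem : ∀ p : Fin (m+n) × Fin (m+n), p ∈ T2 ↔ (m ≤ (p.1:ℕ) ∧ (p.1:ℕ) < (p.2:ℕ)) := by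
    intro p; rw [hT2def]; simp
  have hF1mem : ∀ i : Fin (m+n), i ∈ F1 ↔ (i:ℕ) < m := by
    intro i; rw [hF1def]; simp
  have hF2mem : ∀ i : Fin (m+n), i ∈ F2 ↔ m ≤ (i:ℕ) := by
    intro i; rw [hF2def]; simp
  have hcast : ∀ p : Fin (m+n) × Fin (m+n),
      ((p.1:ℕ):ℝ) ≤ (m:ℝ) + n ∧ ((p.2:ℕ):ℝ) ≤ (m:ℝ) + n ∧ (0:ℝ) ≤ ((p.1:ℕ):ℝ) ∧
        (0:ℝ) ≤ ((p.2:ℕ):ℝ) := by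
    intro p
    have h1 := p.1.isLt
    have h2 := p.2.isLt
    refine ⟨?_, ?_, by positivity, by positivity⟩
    · exact_mod_cast le_of_lt h1
    · exact_mod_cast le_of_lt h2
  -- factor upper bounds
  have hf1bad : ∀ p ∈ T1, f p ≤ c * d := by
    intro p hp
    obtain ⟨hlt, h2m⟩ := (hT1mem p).mp hp
    have h1m : (p.1:ℕ) < m := lt_trans hlt h2m
    have hb := (hfac p hlt (Or.inl h2m)).2
    have hm1 : (mu p.1 : ℝ) ≤ (d:ℝ) + D := hcrude1 p.1 h1m
    have hm2 : (0:ℝ) ≤ (mu p.2 : ℝ) := by exact_mod_cast hpos p.2 h2m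
    obtain ⟨hc1', hc2', hc3', hc4'⟩ := hcast p
    have hcge : (1:ℝ) + D + ((m:ℝ) + n) ≤ c := by
      rw [hcdef]
      have h0 := abs_nonneg ((Sl:ℝ))
      have h1 : (0:ℝ) ≤ (K1:ℝ) := by exact_mod_cast hK1
      have h2 : (0:ℝ) ≤ (K2:ℝ) := by exact_mod_cast hK2
      have h3 : (0:ℝ) ≤ (m:ℝ) + n := by positivity
      linarith only [h0, h1, h2, h3]
    have hX : (0:ℝ) ≤ D + ((m:ℝ) + n) := by positivity
    have h3 : (D + ((m:ℝ) + n)) * 1 ≤ (D + ((m:ℝ) + n)) * d :=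
      mul_le_mul_of_nonneg_left hd1 hX
    have h4 : (1 + (D + ((m:ℝ) + n))) * (d:ℝ) ≤ c * d :=
      mul_le_mul_of_nonneg_right (by linarith only [hcge]) (by positivity)
    calc f p ≤ (mu p.1 : ℝ) - (mu p.2 : ℝ) + ((p.2:ℕ):ℝ) - ((p.1:ℕ):ℝ) := hb
      _ ≤ (d:ℝ) + D + ((m:ℝ) + n) := by linarith only [hm1, hm2, hc2', hc3']
      _ ≤ (1 + (D + ((m:ℝ) + n))) * (d:ℝ) := by linarith only [h3]
      _ ≤ c * d := h4
  have hf1good : ∀ p ∈ T1, p.1 ∉ B1 → f p ≤ c := by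
    intro p hp hnb
    obtain ⟨hlt, h2m⟩ := (hT1mem p).mp hp
    have h1m : (p.1:ℕ) < m := lt_trans hlt h2m
    have hb := (hfac p hlt (Or.inl h2m)).2
    have hm1 : (mu p.1 : ℝ) ≤ (K1:ℝ) + ((m:ℝ) + n) := by
      exact_mod_cast hgood1 p.1 h1m hnb
    have hm2 : (0:ℝ) ≤ (mu p.2 : ℝ) := by exact_mod_cast hpos p.2 h2m
    obtain ⟨hc1', hc2', hc3', hc4'⟩ := hcast p
    have h2 : (0:ℝ) ≤ (K2:ℝ) := by exact_mod_cast hK2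
    have h0 := abs_nonneg ((Sl:ℝ))
    rw [hcdef]
    linarith only [hb, hm1, hm2, hc2', hc3', h2, h0, hD]
  have hf2bad : ∀ p ∈ T2, f p ≤ c * d := by
    intro p hp
    obtain ⟨h1m, hlt⟩ := (hT2mem p).mp hp
    have h2m : m ≤ (p.2:ℕ) := le_trans h1m (le_of_lt hlt)
    have hb := (hfac p hlt (Or.inr h1m)).2
    have hm1 : (mu p.1 : ℝ) ≤ 0 := by exact_mod_cast hneg p.1 h1m
    have hm2 : (Sl:ℝ) - ((d:ℝ) + D) ≤ (mu p.2 : ℝ) := hcrude2 p.2 h2m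
    obtain ⟨hc1', hc2', hc3', hc4'⟩ := hcast p
    have habs : -(|(Sl:ℝ)|) ≤ (Sl:ℝ) := neg_abs_le _
    have hcge : (1:ℝ) + D + |(Sl:ℝ)| + ((m:ℝ) + n) ≤ c := by
      rw [hcdef]
      have h1 : (0:ℝ) ≤ (K1:ℝ) := by exact_mod_cast hK1
      have h2 : (0:ℝ) ≤ (K2:ℝ) := by exact_mod_cast hK2
      have h3 : (0:ℝ) ≤ (m:ℝ) + n := by positivity
      linarith only [h1, h2, h3]
    have hX : (0:ℝ) ≤ D + |(Sl:ℝ)| + ((m:ℝ) + n) := by positivity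
    have h3 : (D + |(Sl:ℝ)| + ((m:ℝ) + n)) * 1 ≤ (D + |(Sl:ℝ)| + ((m:ℝ) + n)) * d :=
      mul_le_mul_of_nonneg_left hd1 hX
    have h4 : (1 + (D + |(Sl:ℝ)| + ((m:ℝ) + n))) * (d:ℝ) ≤ c * d :=
      mul_le_mul_of_nonneg_right (by linarith only [hcge]) (by positivity)
    calc f p ≤ (mu p.1 : ℝ) - (mu p.2 : ℝ) + ((p.2:ℕ):ℝ) - ((p.1:ℕ):ℝ) := hb
      _ ≤ (d:ℝ) + D + |(Sl:ℝ)| + ((m:ℝ) + n) := by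
          linarith only [hm1, hm2, hc2', hc3', habs]
      _ ≤ (1 + (D + |(Sl:ℝ)| + ((m:ℝ) + n))) * (d:ℝ) := by linarith only [h3]
      _ ≤ c * d := h4
  have hf2good : ∀ p ∈ T2, p.2 ∉ B2 → f p ≤ c := by
    intro p hp hnb
    obtain ⟨h1m, hlt⟩ := (hT2mem p).mp hp
    have h2m : m ≤ (p.2:ℕ) := le_trans h1m (le_of_lt hlt)
    have hb := (hfac p hlt (Or.inr h1m)).2
    have hm1 : (mu p.1 : ℝ) ≤ 0 := by exact_mod_cast hneg p.1 h1m
    have hm2 : -((K2:ℝ) + ((m:ℝ) + n)) ≤ (mu p.2 : ℝ) := by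
      exact_mod_cast hgood2 p.2 h2m hnb
    obtain ⟨hc1', hc2', hc3', hc4'⟩ := hcast p
    have h1 : (0:ℝ) ≤ (K1:ℝ) := by exact_mod_cast hK1
    have h0 := abs_nonneg ((Sl:ℝ))
    rw [hcdef]
    linarith only [hb, hm1, hm2, hc2', hc3', h1, h0, hD]
  have hfnn1 : ∀ p ∈ T1, (0:ℝ) ≤ f p := by
    intro p hp
    obtain ⟨hlt, h2m⟩ := (hT1mem p).mp hp
    linarith only [(hfac p hlt (Or.inl h2m)).1]
  have hfnn2 : ∀ p ∈ T2, (0:ℝ) ≤ f p := by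
    intro p hp
    obtain ⟨h1m, hlt⟩ := (hT2mem p).mp hp
    linarith only [(hfac p hlt (Or.inr h1m)).1]
  -- cardinalities
  set s1 := (T1.filter (fun p => p.1 ∈ B1 ∨ p.2 ∈ B1)).card with hs1def
  set u1 := (T1.filter (fun p => ¬ (p.1 ∈ B1 ∨ p.2 ∈ B1))).card with hu1def
  set s2 := (T2.filter (fun p => p.1 ∈ B2 ∨ p.2 ∈ B2)).card with hs2def
  set u2 := (T2.filter (fun p => ¬ (p.1 ∈ B2 ∨ p.2 ∈ B2))).card with hu2def
  have hsplit1 : s1 + u1 = T1.card :=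
    Finset.card_filter_add_card_filter_not
      (fun p : Fin (m+n) × Fin (m+n) => p.1 ∈ B1 ∨ p.2 ∈ B1)
  have hsplit2 : s2 + u2 = T2.card :=
    Finset.card_filter_add_card_filter_not
      (fun p : Fin (m+n) × Fin (m+n) => p.1 ∈ B2 ∨ p.2 ∈ B2)
  have hT1eq : T1 = (F1 ×ˢ F1).filter (fun p => (p.1:ℕ) < (p.2:ℕ)) := by
    ext p
    rw [hT1mem p, Finset.mem_filter, Finset.mem_product, hF1mem, hF1mem]
    omega
  have hT2eq : T2 = (F2 ×ˢ F2).filter (fun p => (p.1:ℕ) < (p.2:ℕ)) := by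
    ext p
    rw [hT2mem p, Finset.mem_filter, Finset.mem_product, hF2mem, hF2mem]
    omega
  have hU1eq : T1.filter (fun p => ¬ (p.1 ∈ B1 ∨ p.2 ∈ B1))
      = (G1 ×ˢ G1).filter (fun p => (p.1:ℕ) < (p.2:ℕ)) := by
    ext p
    rw [Finset.mem_filter, hT1mem p, Finset.mem_filter, Finset.mem_product, hG1def,
      Finset.mem_sdiff, Finset.mem_sdiff, hF1mem, hF1mem]
    constructor
    · rintro ⟨⟨hlt, h2⟩, hnb⟩
      push_neg at hnb
      exact ⟨⟨⟨by omega, hnb.1⟩, ⟨h2, hnb.2⟩⟩, hlt⟩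
    · rintro ⟨⟨⟨h1m, h1b⟩, ⟨h2m, h2b⟩⟩, hlt⟩
      exact ⟨⟨hlt, h2m⟩, not_or.mpr ⟨h1b, h2b⟩⟩
  have hU2eq : T2.filter (fun p => ¬ (p.1 ∈ B2 ∨ p.2 ∈ B2))
      = (G2 ×ˢ G2).filter (fun p => (p.1:ℕ) < (p.2:ℕ)) := by
    ext p
    rw [Finset.mem_filter, hT2mem p, Finset.mem_filter, Finset.mem_product, hG2def,
      Finset.mem_sdiff, Finset.mem_sdiff, hF2mem, hF2mem]
    constructor
    · rintro ⟨⟨h1, hlt⟩, hnb⟩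
      push_neg at hnb
      exact ⟨⟨⟨h1, hnb.1⟩, ⟨by omega, hnb.2⟩⟩, hlt⟩
    · rintro ⟨⟨⟨h1m, h1b⟩, ⟨h2m, h2b⟩⟩, hlt⟩
      exact ⟨⟨h1m, hlt⟩, not_or.mpr ⟨h1b, h2b⟩⟩
  have ht1 : 2 * T1.card + m = m * m := by
    have := two_mul_card_lt_pairs F1
    rw [← hT1eq, hF1card] at this
    exact this
  have ht2 : 2 * T2.card + n = n * n := by
    have := two_mul_card_lt_pairs F2
    rw [← hT2eq, hF2card] at this
    exact this
  have hu1' : 2 * u1 + G1.card = G1.card * G1.card := by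
    have := two_mul_card_lt_pairs G1
    rw [← hU1eq] at this
    exact this
  have hu2' : 2 * u2 + G2.card = G2.card * G2.card := by
    have := two_mul_card_lt_pairs G2
    rw [← hU2eq] at this
    exact this
  -- the combinatorial inequality
  have hcomb : s1 + s2 ≤ (m + n - k - 1) * k := by
    set b1 := B1.card
    set b2 := B2.card
    set g1 := G1.card
    set g2 := G2.card
    have hb1m : b1 ≤ m := le_trans hB1card (le_trans hkn hnm)
    have hb2n : b2 ≤ n := le_trans hB2card hkn
    have hg1z : (g1:ℤ) = (m:ℤ) - b1 := by omega
    have hg2z : (g2:ℤ) = (n:ℤ) - b2 := by omega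
    have e1 : 2 * (T1.card:ℤ) + m = (m:ℤ) * m := by exact_mod_cast ht1
    have e2 : 2 * (T2.card:ℤ) + n = (n:ℤ) * n := by exact_mod_cast ht2
    have e3 : 2 * (u1:ℤ) + g1 = (g1:ℤ) * g1 := by exact_mod_cast hu1'
    have e4 : 2 * (u2:ℤ) + g2 = (g2:ℤ) * g2 := by exact_mod_cast hu2'
    have e5 : (s1:ℤ) + u1 = (T1.card:ℤ) := by exact_mod_cast hsplit1
    have e6 : (s2:ℤ) + u2 = (T2.card:ℤ) := by exact_mod_cast hsplit2
    have hbk1 : (b1:ℤ) ≤ k := by exact_mod_cast hB1card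
    have hbk2 : (b2:ℤ) ≤ k := by exact_mod_cast hB2card
    have hknz : (k:ℤ) ≤ n := by exact_mod_cast hkn
    have hnmz : (n:ℤ) ≤ m := by exact_mod_cast hnm
    have hb1nn : (0:ℤ) ≤ (b1:ℤ) := by positivity
    have hb2nn : (0:ℤ) ≤ (b2:ℤ) := by positivity
    have key1 : 2 * (s1:ℤ) ≤ (k:ℤ) * (2 * m - k - 1) :=
      comb_key m k b1 s1 u1 T1.card g1 hb1nn hbk1 (by omega) hg1z e1 e3 e5
    have key2 : 2 * (s2:ℤ) ≤ (k:ℤ) * (2 * n - k - 1) :=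
      comb_key n k b2 s2 u2 T2.card g2 hb2nn hbk2 (by omega) hg2z e2 e4 e6
    have key : (s1:ℤ) + s2 ≤ ((m:ℤ) + n - k - 1) * k := by
      linarith only [key1, key2]
    have hek : ((m + n - k - 1 : ℕ) : ℤ) = (m:ℤ) + n - k - 1 := by omega
    have : ((s1 + s2 : ℕ) : ℤ) ≤ (((m + n - k - 1) * k : ℕ) : ℤ) := by
      push_cast [hek]
      push_cast at key
      linarith only [key]
    exact_mod_cast this
  -- exponent bound for c
  have hexp : s1 + u1 + (s2 + u2) ≤ 2 * ((m + n) * (m + n)) := by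
    have h1 : T1.card ≤ (m + n) * (m + n) := by
      have := Finset.card_le_univ T1
      simpa using this
    have h2 : T2.card ≤ (m + n) * (m + n) := by
      have := Finset.card_le_univ T2
      simpa using this
    omega
  -- assemble
  have hprod1 : ∏ p ∈ T1, f p ≤ (c * d) ^ s1 * c ^ u1 := by
    rw [← Finset.prod_filter_mul_prod_filter_not T1 (fun p => p.1 ∈ B1 ∨ p.2 ∈ B1) f]
    have hb1 : ∏ p ∈ T1.filter (fun p => p.1 ∈ B1 ∨ p.2 ∈ B1), f p ≤ (c * d) ^ s1 := by
      rw [hs1def, ← Finset.prod_const]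
      refine Finset.prod_le_prod (fun p hp => hfnn1 p (Finset.mem_of_mem_filter p hp))
        (fun p hp => hf1bad p (Finset.mem_of_mem_filter p hp))
    have hb2 : ∏ p ∈ T1.filter (fun p => ¬ (p.1 ∈ B1 ∨ p.2 ∈ B1)), f p ≤ c ^ u1 := by
      rw [hu1def, ← Finset.prod_const]
      refine Finset.prod_le_prod (fun p hp => hfnn1 p (Finset.mem_of_mem_filter p hp))
        (fun p hp => ?_)
      have hnb : p.1 ∉ B1 := fun h => (Finset.mem_filter.mp hp).2 (Or.inl h)
      exact hf1good p (Finset.mem_of_mem_filter p hp) hnb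
    refine mul_le_mul hb1 hb2 (Finset.prod_nonneg
      (fun p hp => hfnn1 p (Finset.mem_of_mem_filter p hp))) (by positivity)
  have hprod2 : ∏ p ∈ T2, f p ≤ (c * d) ^ s2 * c ^ u2 := by
    rw [← Finset.prod_filter_mul_prod_filter_not T2 (fun p => p.1 ∈ B2 ∨ p.2 ∈ B2) f]
    have hb1 : ∏ p ∈ T2.filter (fun p => p.1 ∈ B2 ∨ p.2 ∈ B2), f p ≤ (c * d) ^ s2 := by
      rw [hs2def, ← Finset.prod_const]
      refine Finset.prod_le_prod (fun p hp => hfnn2 p (Finset.mem_of_mem_filter p hp))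
        (fun p hp => hf2bad p (Finset.mem_of_mem_filter p hp))
    have hb2 : ∏ p ∈ T2.filter (fun p => ¬ (p.1 ∈ B2 ∨ p.2 ∈ B2)), f p ≤ c ^ u2 := by
      rw [hu2def, ← Finset.prod_const]
      refine Finset.prod_le_prod (fun p hp => hfnn2 p (Finset.mem_of_mem_filter p hp))
        (fun p hp => ?_)
      have hnb : p.2 ∉ B2 := fun h => (Finset.mem_filter.mp hp).2 (Or.inr h)
      exact hf2good p (Finset.mem_of_mem_filter p hp) hnb
    refine mul_le_mul hb1 hb2 (Finset.prod_nonneg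
      (fun p hp => hfnn2 p (Finset.mem_of_mem_filter p hp))) (by positivity)
  calc ((weylW m n mu : ℚ) : ℝ) = (∏ p ∈ T1, f p) * (∏ p ∈ T2, f p) := hW
    _ ≤ ((c * d) ^ s1 * c ^ u1) * ((c * d) ^ s2 * c ^ u2) := by
        refine mul_le_mul hprod1 hprod2 (Finset.prod_nonneg
          (fun p hp => hfnn2 p hp)) (by positivity)
    _ = c ^ (s1 + u1 + (s2 + u2)) * (d:ℝ) ^ (s1 + s2) := by
        rw [mul_pow, mul_pow]
        ring
    _ ≤ c ^ (2 * ((m + n) * (m + n))) * (d:ℝ) ^ ((m + n - k - 1) * k) := by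
        refine mul_le_mul (pow_le_pow_right₀ hc1 hexp) (pow_le_pow_right₀ hd1 hcomb)
          (by positivity) (by positivity)
end
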